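/- arXiv:1407.5974 — 5 statements merged into one kernel-verified Lean document; each statement's English description precedes it below -/
import Mathlib

section
/- Let T > 0, let α ∈ (0,1) and ε ∈ (0, 1−α). Let (X_t)_{t∈[0,T]} be a jointly measurable real-valued stochastic process on a probability space (Ω,F,P) whose sample paths are almost surely (α+ε)-Hölder continuous on [0,T], and which satisfies the bounded-density assumption with some nonnegative g ∈ L¹([0,T]). Let f : ℝ → ℝ be of locally bounded variation. Then almost surely ∫₀^T |f(X_s)| s^{−α} ds < ∞ and ∫₀^T ∫₀^t |f(X_t) − f(X_s)| (t−s)^{−1−α} ds dt < ∞; that is, almost surely the path t ↦ f(X_t) has finite fractional Besov norm ‖f(X_·)‖_{2,α} < ∞. -/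
open MeasureTheory Set
open scoped ENNReal

noncomputable section

/-- `x` is `α`-Hölder continuous on `[0,T]`. -/
def HolderOnIcc (α T : ℝ) (x : ℝ → ℝ) : Prop :=
  ∃ C : ℝ, ∀ s ∈ Set.Icc (0:ℝ) T, ∀ t ∈ Set.Icc (0:ℝ) T, |x t - x s| ≤ C * |t - s| ^ α

/-- The bounded-density assumption: for a.e. `t ∈ [0,T]`, the law of `X_t` is bounded above by
`g t` times Lebesgue measure. -/
def BoundedDensityAssumption {Ω : Type*} [MeasurableSpace Ω] (P : Measure Ω)
    (T : ℝ) (X : ℝ → Ω → ℝ) (g : ℝ → ℝ) : Prop :=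
  ∀ᵐ t ∂(volume.restrict (Set.Icc (0:ℝ) T)),
    ∀ A : Set ℝ, MeasurableSet A → P {ω | X t ω ∈ A} ≤ ENNReal.ofReal (g t) * volume A

open Metric

/-!
Since `f` has locally bounded variation, `|f b - f a| ≤ μ [a, b]` for a locally finite
(Stieltjes) measure `μ`. On a path that is `β`-Hölder with constant `C` and bounded by `N`, this
gives `|f (x t) - f (x s)| ≤ μ (B(x t, C (t - s) ^ β) ∩ [-N, N])`, and Tonelli bounds the inner
Besov integral by `C ^ (α / β) / α * ∫_{[-N, N]} |y - x t| ^ (-α / β) dμ(y)`. As `α / β < 1`, the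
kernel `|u| ^ (-α / β)` is locally integrable, so the bounded-density assumption bounds
`E |y - X t| ^ (-α / β)` by `1 + g t * ∫_{|u| < 1} |u| ^ (-α / β) du` uniformly in `y`. Hence
`∫₀ᵀ ∫_{[-N, N]} |y - X t| ^ (-α / β) dμ(y) dt` has finite expectation and is a.s. finite for
every `N`. The weighted term is finite because `f` is bounded on the range of a bounded path and
`α < 1`.
-/

theorem LocallyBoundedVariationOn.exists_ofReal_abs_sub_le_measure_uIcc {f : ℝ → ℝ}
    (hf : LocallyBoundedVariationOn f univ) :
    ∃ μ : Measure ℝ, IsLocallyFiniteMeasure μ ∧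
      ∀ a b, ENNReal.ofReal |f b - f a| ≤ μ (uIcc a b) := by
  set V := variationOnFromTo f univ 0
  have hV : Monotone V := monotoneOn_univ.1 (variationOnFromTo.monotoneOn hf (mem_univ 0))
  set F := hV.stieltjesFunction
  have hleft : ∀ a, Function.leftLim F a ≤ V a := fun a =>
    le_of_tendsto (F.mono.tendsto_leftLim a)
      (eventually_nhdsWithin_of_forall fun _ hc => hV.rightLim_le hc)
  have hle : ∀ a b, a ≤ b → ENNReal.ofReal |f b - f a| ≤ F.measure (Icc a b) := by
    intro a b hab
    rw [StieltjesFunction.measure_Icc]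
    refine ENNReal.ofReal_le_ofReal ?_
    have hvar :=
      variationOnFromTo.abs_sub_le_sub_of_le hf (mem_univ 0) (mem_univ a) (mem_univ b) hab
    have hright : V b ≤ F b := hV.le_rightLim le_rfl
    linarith [hleft a]
  refine ⟨F.measure, inferInstance, fun a b => ?_⟩
  rcases le_total a b with hab | hba
  · simpa [uIcc_of_le hab] using hle a b hab
  · simpa [uIcc_of_ge hba, abs_sub_comm] using hle b a hba

namespace HolderOnIcc

variable {β T : ℝ} {x : ℝ → ℝ}

theorem exists_pos_const (hx : HolderOnIcc β T x) :
    ∃ C > 0, ∀ s ∈ Icc 0 T, ∀ t ∈ Icc 0 T, |x t - x s| ≤ C * |t - s| ^ β := by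
  obtain ⟨C, hC⟩ := hx
  refine ⟨max C 1, by positivity, fun s hs t ht => (hC s hs t ht).trans ?_⟩
  gcongr
  exact le_max_left C 1

theorem exists_nat_abs_le (hx : HolderOnIcc β T x) (hβ : 0 ≤ β) :
    ∃ N : ℕ, ∀ t ∈ Icc 0 T, |x t| ≤ N := by
  obtain ⟨C, hC, hxC⟩ := hx.exists_pos_const
  obtain ⟨N, hN⟩ := exists_nat_ge (|x 0| + C * T ^ β)
  refine ⟨N, fun t ht => ?_⟩
  have h0 : (0 : ℝ) ∈ Icc 0 T := ⟨le_rfl, ht.1.trans ht.2⟩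
  have hpow : |t - 0| ^ β ≤ T ^ β := by
    rw [sub_zero, abs_of_nonneg ht.1]
    exact Real.rpow_le_rpow ht.1 ht.2 hβ
  calc |x t| ≤ |x 0| + |x t - x 0| := by
        simpa using abs_add_le (x 0) (x t - x 0)
    _ ≤ |x 0| + C * T ^ β := by gcongr; exact (hxC 0 h0 t ht).trans (by gcongr)
    _ ≤ N := hN

end HolderOnIcc

theorem setLIntegral_Ioo_ofReal_abs_mul_rpow_neg_lt_top {h : ℝ → ℝ} {K α T : ℝ} (hα : α < 1)
    (hh : ∀ s ∈ Ioo 0 T, |h s| ≤ K) :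
    ∫⁻ s in Ioo 0 T, ENNReal.ofReal (|h s| * s ^ (-α)) < ⊤ := by
  have hint : IntegrableOn (fun s : ℝ => K * s ^ (-α)) (Ioo 0 T) :=
    ((intervalIntegral.intervalIntegrable_rpow' (by linarith)).1.mono_set
      Ioo_subset_Ioc_self).const_mul K
  refine lt_of_le_of_lt (setLIntegral_mono (by fun_prop) fun s hs => ?_)
    hint.setLIntegral_lt_top
  exact ENNReal.ofReal_le_ofReal (mul_le_mul_of_nonneg_right (hh s hs) (Real.rpow_nonneg hs.1.le _))

theorem lintegral_Ioi_ofReal_rpow {q r : ℝ} (hq : q < -1) (hr : 0 < r) :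
    ∫⁻ u in Ioi r, ENNReal.ofReal (u ^ q) = ENNReal.ofReal (-r ^ (q + 1) / (q + 1)) := by
  rw [← ofReal_integral_eq_lintegral_ofReal (integrableOn_Ioi_rpow_of_lt hq hr)
      (ae_restrict_of_forall_mem measurableSet_Ioi fun u hu => Real.rpow_nonneg (hr.trans hu).le _),
    integral_Ioi_rpow_of_lt hq hr]

theorem setLIntegral_Iio_ite_rpow_le {α β C a t : ℝ} (hα : 0 < α) (hβ : 0 < β) (hC : 0 < C)
    (ha : 0 ≤ a) :
    ∫⁻ s in Iio t, (if a ≤ C * (t - s) ^ β then ENNReal.ofReal ((t - s) ^ (-(1 + α))) else 0)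
      ≤ ENNReal.ofReal (C ^ (α / β) / α) * ENNReal.ofReal a ^ (-(α / β)) := by
  rcases ha.eq_or_lt with rfl | ha
  · rw [ENNReal.ofReal_zero, ENNReal.zero_rpow_of_neg (by simp [div_pos hα hβ]),
      ENNReal.mul_top (by simp [div_pos (Real.rpow_pos_of_pos hC _) hα])]
    exact le_top
  set r := (a / C) ^ β⁻¹
  have hr : 0 < r := by positivity
  set k : ℝ → ℝ≥0∞ := (Ici r).indicator fun u => ENNReal.ofReal (u ^ (-(1 + α)))
  have hk : Measurable k := (by fun_prop : Measurable _).indicator measurableSet_Ici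
  have hpt : ∀ s ∈ Iio t,
      (if a ≤ C * (t - s) ^ β then ENNReal.ofReal ((t - s) ^ (-(1 + α))) else 0) ≤ k (t - s) := by
    intro s hs
    split_ifs with hcond
    · have hts : r ≤ t - s := (Real.rpow_inv_le_iff_of_pos (by positivity)
        (sub_pos.2 hs).le hβ).2 ((div_le_iff₀' hC).2 hcond)
      simp [k, indicator_of_mem (mem_Ici.2 hts)]
    · exact zero_le
  have hrα : r ^ (-α) = C ^ (α / β) * a ^ (-(α / β)) := by
    rw [← Real.rpow_mul (by positivity), Real.div_rpow ha.le hC.le, div_eq_mul_inv,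
      ← Real.rpow_neg hC.le, mul_comm]
    congr 2 <;> ring
  calc _ ≤ ∫⁻ s in Iio t, k (t - s) := setLIntegral_mono (hk.comp (by fun_prop)) hpt
    _ ≤ ∫⁻ s, k (t - s) := setLIntegral_le_lintegral _ _
    _ = ∫⁻ u in Ici r, ENNReal.ofReal (u ^ (-(1 + α))) := by
      rw [lintegral_sub_left_eq_self, lintegral_indicator measurableSet_Ici]
    _ = ∫⁻ u in Ioi r, ENNReal.ofReal (u ^ (-(1 + α))) := setLIntegral_congr Ioi_ae_eq_Ici.symm
    _ = ENNReal.ofReal (C ^ (α / β) / α) * ENNReal.ofReal a ^ (-(α / β)) := by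
      rw [lintegral_Ioi_ofReal_rpow (by linarith) hr, ENNReal.ofReal_rpow_of_pos ha,
        ← ENNReal.ofReal_mul (by positivity)]
      congr 1
      rw [show -(1 + α) + 1 = -α by ring, neg_div_neg_eq, hrα]
      ring

/- The kernel is `ℝ≥0∞`-valued so that it equals `⊤` at `y = b`: `ν` may have an atom there,
whereas the real power `0 ^ (-γ)` would be `0`. -/
theorem setLIntegral_Ioo_mul_rpow_le_of_le_measure_closedBall {ν : Measure ℝ} [SFinite ν]
    {α β C t b : ℝ} (hα : 0 < α) (hβ : 0 < β) (hC : 0 < C) {φ : ℝ → ℝ≥0∞}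
    (hφ : ∀ s ∈ Ioo 0 t, φ s ≤ ν (closedBall b (C * (t - s) ^ β))) :
    ∫⁻ s in Ioo 0 t, φ s * ENNReal.ofReal ((t - s) ^ (-(1 + α)))
      ≤ ENNReal.ofReal (C ^ (α / β) / α) * ∫⁻ y, edist y b ^ (-(α / β)) ∂ν := by
  set G : ℝ → ℝ → ℝ≥0∞ := fun s y =>
    if dist y b ≤ C * (t - s) ^ β then ENNReal.ofReal ((t - s) ^ (-(1 + α))) else 0
  have hG : Measurable (Function.uncurry G) :=
    Measurable.ite (measurableSet_le (by fun_prop) (by fun_prop)) (by fun_prop) measurable_const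
  calc ∫⁻ s in Ioo 0 t, φ s * ENNReal.ofReal ((t - s) ^ (-(1 + α)))
      ≤ ∫⁻ s in Ioo 0 t, ∫⁻ y, G s y ∂ν := by
        refine setLIntegral_mono hG.lintegral_prod_right' fun s hs => ?_
        rw [show ∫⁻ y, G s y ∂ν = _ from lintegral_indicator_const measurableSet_closedBall _,
          mul_comm]
        gcongr
        exact hφ s hs
    _ = ∫⁻ y, (∫⁻ s in Ioo 0 t, G s y) ∂ν := lintegral_lintegral_swap hG.aemeasurable
    _ ≤ ∫⁻ y, (∫⁻ s in Iio t, G s y) ∂ν :=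
        lintegral_mono fun y => lintegral_mono_set Ioo_subset_Iio_self
    _ ≤ ∫⁻ y, ENNReal.ofReal (C ^ (α / β) / α) * edist y b ^ (-(α / β)) ∂ν := by
        refine lintegral_mono fun y => ?_
        rw [edist_dist]
        exact setLIntegral_Iio_ite_rpow_le hα hβ hC dist_nonneg
    _ = ENNReal.ofReal (C ^ (α / β) / α) * ∫⁻ y, edist y b ^ (-(α / β)) ∂ν :=
        lintegral_const_mul' _ _ ENNReal.ofReal_ne_top

theorem setLIntegral_ball_enorm_rpow_neg_lt_top {γ : ℝ} (hγ : γ < 1) :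
    ∫⁻ u in ball (0 : ℝ) 1, ‖u‖ₑ ^ (-γ) < ⊤ := by
  have hint : IntegrableOn (fun u : ℝ => ‖u‖ ^ (-γ)) (ball 0 1) :=
    integrableOn_ball_of_norm_le_rpow (C := 1) (by simp) (by simpa using hγ)
      (ae_of_all _ fun u => by rw [one_mul, Real.norm_of_nonneg (by positivity)])
      (measurable_norm.pow_const _).aestronglyMeasurable
  refine lt_of_eq_of_lt (setLIntegral_congr_fun_ae measurableSet_ball ?_) hint.setLIntegral_lt_top
  filter_upwards [compl_mem_ae_iff.2 (measure_singleton (0 : ℝ))] with u hu _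
  rw [← ofReal_norm, ENNReal.ofReal_rpow_of_pos (norm_pos_iff.2 hu)]

theorem lintegral_edist_rpow_neg_le {ν : Measure ℝ} {c : ℝ≥0∞} (hν : ν ≤ c • volume) {γ : ℝ}
    (hγ : 0 < γ) (y : ℝ) :
    ∫⁻ v, edist y v ^ (-γ) ∂ν ≤ ν univ + c * ∫⁻ u in ball (0 : ℝ) 1, ‖u‖ₑ ^ (-γ) := by
  set k : ℝ → ℝ≥0∞ := (ball 0 1).indicator fun u => ‖u‖ₑ ^ (-γ)
  have hsplit : ∀ v, edist y v ^ (-γ) ≤ 1 + k (v - y) := by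
    intro v
    rw [edist_comm, edist_eq_enorm_sub]
    by_cases hv : v - y ∈ ball 0 1
    · simp [k, indicator_of_mem hv]
    · rw [show k (v - y) = 0 from indicator_of_notMem hv _, add_zero]
      refine ENNReal.rpow_le_one_of_one_le_of_neg ?_ (neg_lt_zero.2 hγ)
      rw [← ofReal_norm, ENNReal.one_le_ofReal]
      simpa using hv
  calc ∫⁻ v, edist y v ^ (-γ) ∂ν ≤ ∫⁻ v, (1 + k (v - y)) ∂ν := lintegral_mono hsplit
    _ = ν univ + ∫⁻ v, k (v - y) ∂ν := by rw [lintegral_add_left measurable_const, lintegral_one]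
    _ ≤ ν univ + ∫⁻ v, k (v - y) ∂(c • volume) := by gcongr
    _ = ν univ + c * ∫⁻ u in ball (0 : ℝ) 1, ‖u‖ₑ ^ (-γ) := by
      rw [lintegral_smul_measure, lintegral_sub_right_eq_self,
        lintegral_indicator measurableSet_ball, smul_eq_mul]

theorem BoundedDensityAssumption.ae_map_le {Ω : Type*} [MeasurableSpace Ω] {P : Measure Ω}
    {T : ℝ} {X : ℝ → Ω → ℝ} {g : ℝ → ℝ} (h : BoundedDensityAssumption P T X g)
    (hX : ∀ t, Measurable (X t)) :
    ∀ᵐ t ∂volume.restrict (Icc 0 T), P.map (X t) ≤ ENNReal.ofReal (g t) • volume := by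
  filter_upwards [h] with t ht
  refine Measure.le_iff.2 fun A hA => ?_
  rw [Measure.map_apply (hX t) hA, Measure.smul_apply, smul_eq_mul]
  exact ht A hA

theorem lintegral_lintegral_edist_rpow_neg_le {Ω : Type*} [MeasurableSpace Ω] (P : Measure Ω)
    [SFinite P] {Y : Ω → ℝ} (hY : Measurable Y) {c : ℝ≥0∞} (hPY : P.map Y ≤ c • volume)
    {γ : ℝ} (hγ : 0 < γ) (ν : Measure ℝ) [SFinite ν] :
    ∫⁻ ω, ∫⁻ y, edist y (Y ω) ^ (-γ) ∂ν ∂P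
      ≤ ν univ * (P univ + c * ∫⁻ u in ball (0 : ℝ) 1, ‖u‖ₑ ^ (-γ)) := by
  have hk : Measurable fun p : ℝ × ℝ => edist p.2 p.1 ^ (-γ) := by fun_prop
  calc ∫⁻ ω, ∫⁻ y, edist y (Y ω) ^ (-γ) ∂ν ∂P
      = ∫⁻ y, ∫⁻ v, edist y v ^ (-γ) ∂(P.map Y) ∂ν := by
        rw [lintegral_lintegral_swap (f := fun ω y => edist y (Y ω) ^ (-γ))
          (hk.comp (hY.prodMap measurable_id)).aemeasurable]
        exact lintegral_congr fun y =>
          (lintegral_map (hk.comp measurable_prodMk_right) hY).symm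
    _ ≤ ∫⁻ _, (P univ + c * ∫⁻ u in ball (0 : ℝ) 1, ‖u‖ₑ ^ (-γ)) ∂ν := by
        refine lintegral_mono fun y => ?_
        simpa [Measure.map_apply hY MeasurableSet.univ] using lintegral_edist_rpow_neg_le hPY hγ y
    _ = ν univ * (P univ + c * ∫⁻ u in ball (0 : ℝ) 1, ‖u‖ₑ ^ (-γ)) := by
        rw [lintegral_const, mul_comm]

theorem ae_setLIntegral_Ioo_lintegral_edist_rpow_neg_lt_top {Ω : Type*} [MeasurableSpace Ω]
    (P : Measure Ω) [IsFiniteMeasure P] {T : ℝ} {X : ℝ → Ω → ℝ}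
    (hX : Measurable (Function.uncurry X)) {g : ℝ → ℝ} (hg : IntegrableOn g (Icc 0 T))
    (hdens : BoundedDensityAssumption P T X g) {γ : ℝ} (hγ0 : 0 < γ) (hγ1 : γ < 1)
    (ν : Measure ℝ) [IsFiniteMeasure ν] :
    ∀ᵐ ω ∂P, ∫⁻ t in Ioo 0 T, ∫⁻ y, edist y (X t ω) ^ (-γ) ∂ν < ⊤ := by
  set B := ∫⁻ u in ball (0 : ℝ) 1, ‖u‖ₑ ^ (-γ)
  have hB : B < ⊤ := setLIntegral_ball_enorm_rpow_neg_lt_top hγ1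
  have hXt : ∀ t, Measurable (X t) := fun t => hX.comp measurable_prodMk_left
  have hk : Measurable fun p : (Ω × ℝ) × ℝ => edist p.2 (X p.1.2 p.1.1) ^ (-γ) := by
    have : Measurable fun p : (Ω × ℝ) × ℝ => X p.1.2 p.1.1 :=
      hX.comp (measurable_fst.snd.prodMk measurable_fst.fst)
    fun_prop
  have hmoment : ∀ᵐ t ∂volume.restrict (Ioo 0 T),
      ∫⁻ ω, ∫⁻ y, edist y (X t ω) ^ (-γ) ∂ν ∂P ≤ ν univ * (P univ + ENNReal.ofReal (g t) * B) := by
    filter_upwards [ae_restrict_of_ae_restrict_of_subset Ioo_subset_Icc_self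
      (hdens.ae_map_le hXt)] with t ht
    exact lintegral_lintegral_edist_rpow_neg_le P (hXt t) ht hγ0 ν
  have hbound : ∫⁻ t in Ioo 0 T, ν univ * (P univ + ENNReal.ofReal (g t) * B) < ⊤ := by
    rw [lintegral_const_mul' _ _ (measure_ne_top ν univ),
      lintegral_add_left measurable_const, setLIntegral_const, lintegral_mul_const' _ _ hB.ne]
    exact ENNReal.mul_lt_top (measure_lt_top ν univ) (ENNReal.add_lt_top.2
      ⟨ENNReal.mul_lt_top (measure_lt_top P univ) measure_Ioo_lt_top,
        ENNReal.mul_lt_top (hg.mono_set Ioo_subset_Icc_self).setLIntegral_lt_top hB⟩)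
  refine ae_lt_top hk.lintegral_prod_right'.lintegral_prod_right' (ne_of_lt ?_)
  calc ∫⁻ ω, (∫⁻ t in Ioo 0 T, ∫⁻ y, edist y (X t ω) ^ (-γ) ∂ν) ∂P
      = ∫⁻ t in Ioo 0 T, ∫⁻ ω, ∫⁻ y, edist y (X t ω) ^ (-γ) ∂ν ∂P :=
        lintegral_lintegral_swap hk.lintegral_prod_right'.aemeasurable
    _ ≤ ∫⁻ t in Ioo 0 T, ν univ * (P univ + ENNReal.ofReal (g t) * B) := lintegral_mono_ae hmoment
    _ < ⊤ := hbound

section PathEstimates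

variable {f : ℝ → ℝ} {μ : Measure ℝ} [IsLocallyFiniteMeasure μ] {x : ℝ → ℝ} {α β T : ℝ}

theorem setLIntegral_Ioo_ofReal_abs_comp_mul_rpow_neg_lt_top
    (hfμ : ∀ a b, ENNReal.ofReal |f b - f a| ≤ μ (uIcc a b)) (hx : HolderOnIcc β T x)
    (hβ : 0 ≤ β) (hα : α < 1) :
    ∫⁻ s in Ioo 0 T, ENNReal.ofReal (|f (x s)| * s ^ (-α)) < ⊤ := by
  obtain ⟨N, hN⟩ := hx.exists_nat_abs_le hβ
  refine setLIntegral_Ioo_ofReal_abs_mul_rpow_neg_lt_top hα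
    (K := |f 0| + (μ (Icc (-N) N)).toReal) fun s hs => ?_
  have hsub : uIcc 0 (x s) ⊆ Icc (-N) N :=
    uIcc_subset_Icc ⟨by simp, by simp⟩ (abs_le.1 (hN s ⟨hs.1.le, hs.2.le⟩))
  have hdiff : |f (x s) - f 0| ≤ (μ (Icc (-N) N)).toReal :=
    (ENNReal.ofReal_le_iff_le_toReal measure_Icc_lt_top.ne).1
      ((hfμ 0 (x s)).trans (measure_mono hsub))
  calc |f (x s)| ≤ |f 0| + |f (x s) - f 0| := by simpa using abs_add_le (f 0) (f (x s) - f 0)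
    _ ≤ _ := by gcongr

theorem setLIntegral_Ioo_setLIntegral_Ioo_ofReal_abs_sub_comp_mul_rpow_lt_top
    (hfμ : ∀ a b, ENNReal.ofReal |f b - f a| ≤ μ (uIcc a b)) (hx : Measurable x) (hxH : HolderOnIcc β T x) (hα : 0 < α) (hβ : 0 < β)
    (hZ : ∀ N : ℕ,
      ∫⁻ t in Ioo 0 T, ∫⁻ y in Icc (-N : ℝ) N, edist y (x t) ^ (-(α / β)) ∂μ < ⊤) :
    ∫⁻ t in Ioo 0 T, ∫⁻ s in Ioo 0 t,
      ENNReal.ofReal (|f (x t) - f (x s)| * (t - s) ^ (-(1 + α))) < ⊤ := by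
  obtain ⟨C, hC, hxC⟩ := hxH.exists_pos_const
  obtain ⟨N, hN⟩ := hxH.exists_nat_abs_le hβ.le
  set K := ENNReal.ofReal (C ^ (α / β) / α)
  have hmod : ∀ t ∈ Ioo 0 T, ∀ s ∈ Ioo 0 t, ENNReal.ofReal |f (x t) - f (x s)|
      ≤ μ.restrict (Icc (-N) N) (closedBall (x t) (C * (t - s) ^ β)) := by
    intro t ht s hs
    have ht' : t ∈ Icc 0 T := ⟨ht.1.le, ht.2.le⟩
    have hs' : s ∈ Icc 0 T := ⟨hs.1.le, hs.2.le.trans ht'.2⟩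
    have hxts : |x t - x s| ≤ C * (t - s) ^ β := by
      simpa [abs_of_pos (sub_pos.2 hs.2)] using hxC s hs' t ht'
    have hball : uIcc (x s) (x t) ⊆ closedBall (x t) (C * (t - s) ^ β) := by
      rw [Real.closedBall_eq_Icc]
      refine uIcc_subset_Icc ⟨?_, ?_⟩ ⟨?_, ?_⟩ <;>
        linarith [abs_le.1 hxts, mul_nonneg hC.le (Real.rpow_nonneg (sub_pos.2 hs.2).le β)]
    have hbox : uIcc (x s) (x t) ⊆ Icc (-N) N :=
      uIcc_subset_Icc (abs_le.1 (hN s hs')) (abs_le.1 (hN t ht'))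
    rw [Measure.restrict_apply measurableSet_closedBall]
    exact (hfμ _ _).trans (measure_mono (subset_inter hball hbox))
  have hmeas : Measurable fun t => K * ∫⁻ y in Icc (-N : ℝ) N, edist y (x t) ^ (-(α / β)) ∂μ :=
    (Measurable.lintegral_prod_right'
      (by fun_prop : Measurable fun p : ℝ × ℝ => edist p.2 (x p.1) ^ (-(α / β)))).const_mul K
  calc _ ≤ ∫⁻ t in Ioo 0 T, K * ∫⁻ y in Icc (-N : ℝ) N, edist y (x t) ^ (-(α / β)) ∂μ := by
        refine setLIntegral_mono hmeas fun t ht => ?_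
        simp_rw [ENNReal.ofReal_mul (abs_nonneg _)]
        exact setLIntegral_Ioo_mul_rpow_le_of_le_measure_closedBall hα hβ hC (hmod t ht)
    _ = K * ∫⁻ t in Ioo 0 T, ∫⁻ y in Icc (-N : ℝ) N, edist y (x t) ^ (-(α / β)) ∂μ :=
        lintegral_const_mul' _ _ ENNReal.ofReal_ne_top
    _ < ⊤ := ENNReal.mul_lt_top ENNReal.ofReal_lt_top (hZ N)

end PathEstimates

theorem besov_norm_finite_general
    {Ω : Type*} [MeasurableSpace Ω] (P : Measure Ω) [IsProbabilityMeasure P]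
    (T α ε : ℝ) (hα : α ∈ Set.Ioo (0:ℝ) 1) (hε : ε ∈ Set.Ioo (0:ℝ) (1 - α))
    (X : ℝ → Ω → ℝ) (hX : Measurable (Function.uncurry X))
    (hXHolder : ∀ᵐ ω ∂P, HolderOnIcc (α + ε) T (fun t => X t ω))
    (g : ℝ → ℝ) (hgL1 : IntegrableOn g (Set.Icc 0 T))
    (hdens : BoundedDensityAssumption P T X g)
    (f : ℝ → ℝ) (hf : LocallyBoundedVariationOn f Set.univ) :
    ∀ᵐ ω ∂P,
      (∫⁻ s in Set.Ioo (0:ℝ) T, ENNReal.ofReal (|f (X s ω)| * s ^ (-α))) < ⊤ ∧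
      (∫⁻ t in Set.Ioo (0:ℝ) T, ∫⁻ s in Set.Ioo (0:ℝ) t,
        ENNReal.ofReal (|f (X t ω) - f (X s ω)| * (t - s) ^ (-(1 + α)))) < ⊤ := by
  obtain ⟨hα0, hα1⟩ := hα
  have hαβ : α < α + ε := by linarith [hε.1]
  have hβ : 0 < α + ε := hα0.trans hαβ
  obtain ⟨μ, _, hfμ⟩ := hf.exists_ofReal_abs_sub_le_measure_uIcc
  have (N : ℕ) : IsFiniteMeasure (μ.restrict (Icc (-N : ℝ) N)) :=
    isFiniteMeasure_restrict.2 measure_Icc_lt_top.ne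
  have hZ : ∀ᵐ ω ∂P, ∀ N : ℕ, ∫⁻ t in Ioo 0 T, ∫⁻ y in Icc (-N : ℝ) N,
      edist y (X t ω) ^ (-(α / (α + ε))) ∂μ < ⊤ :=
    ae_all_iff.2 fun N => ae_setLIntegral_Ioo_lintegral_edist_rpow_neg_lt_top P hX hgL1 hdens
      (div_pos hα0 hβ) ((div_lt_one hβ).2 hαβ) _
  filter_upwards [hXHolder, hZ] with ω hω hZω
  exact ⟨setLIntegral_Ioo_ofReal_abs_comp_mul_rpow_neg_lt_top hfμ hω hβ.le hα1,
    setLIntegral_Ioo_setLIntegral_Ioo_ofReal_abs_sub_comp_mul_rpow_lt_top hfμ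
      (hX.comp measurable_prodMk_right) hω hα0 hβ hZω⟩

/-- if `X` has a.s. `(α+ε)`-Hölder paths on `[0,T]`, satisfies the bounded-density
assumption with a nonnegative `g ∈ L¹([0,T])`, and `f` is of locally bounded variation, then
almost surely the path `t ↦ f(X_t)` has finite fractional Besov norm `‖f(X_·)‖_{2,α}`. -/
theorem besov_norm_finite
    {Ω : Type*} [MeasurableSpace Ω] (P : Measure Ω) [IsProbabilityMeasure P]
    (T α ε : ℝ) (hT : 0 < T) (hα : α ∈ Set.Ioo (0:ℝ) 1) (hε : ε ∈ Set.Ioo (0:ℝ) (1 - α))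
    (X : ℝ → Ω → ℝ) (hX : Measurable (Function.uncurry X))
    (hXHolder : ∀ᵐ ω ∂P, HolderOnIcc (α + ε) T (fun t => X t ω))
    (g : ℝ → ℝ) (hg0 : ∀ t, 0 ≤ g t) (hgL1 : IntegrableOn g (Set.Icc 0 T))
    (hdens : BoundedDensityAssumption P T X g)
    (f : ℝ → ℝ) (hf : LocallyBoundedVariationOn f Set.univ) :
    ∀ᵐ ω ∂P,
      (∫⁻ s in Set.Ioo (0:ℝ) T, ENNReal.ofReal (|f (X s ω)| * s ^ (-α))) < ⊤ ∧
      (∫⁻ t in Set.Ioo (0:ℝ) T, ∫⁻ s in Set.Ioo (0:ℝ) t,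
        ENNReal.ofReal (|f (X t ω) - f (X s ω)| * (t - s) ^ (-(1 + α)))) < ⊤ :=
  besov_norm_finite_general P T α ε hα hε X hX hXHolder g hgL1 hdens f hf

end
end

section
/- Let T > 0, let α, γ ∈ (0,1) with α + γ > 1, and fix β ∈ (1−γ, α). Let (X_t)_{t∈[0,T]} be a jointly measurable real-valued stochastic process whose sample paths are almost surely α-Hölder continuous and which satisfies the bounded-density assumption with some nonnegative g ∈ L¹([0,T]), let f : ℝ → ℝ be of locally bounded variation, and let (Y_t)_{t∈[0,T]} be a stochastic process whose sample paths are almost surely γ-Hölder continuous. Then almost surely the function φ(s) := ( f(X_s) s^{−β} + β ∫₀^s (f(X_s) − f(X_u)) (s−u)^{−1−β} du ) · ( (Y_s − Y_T)(T−s)^{−(1−β)} + (1−β) ∫_s^T (Y_s − Y_u)(u−s)^{−(2−β)} du ) is defined for almost every s ∈ (0,T) and is Lebesgue integrable on (0,T); that is, the generalized Lebesgue–Stieltjes integral ∫₀^T f(X_s) dY_s (which equals ∫₀^T φ(s) ds up to the multiplicative Gamma-function constants in the Weyl fractional derivatives) exists almost surely. -/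
open MeasureTheory Set
open scoped ENNReal

noncomputable section

private lemma rat_close {T : ℝ} (hT : 0 < T) {s : ℝ} (hs : s ∈ Icc (0:ℝ) T) {δ : ℝ} (hδ : 0 < δ) :
    ∃ q : ℚ, (q:ℝ) ∈ Icc (0:ℝ) T ∧ |(q:ℝ) - s| < δ := by
  rcases eq_or_lt_of_le hs.1 with h0 | h0
  · exact ⟨0, ⟨by simp, by simpa using hT.le⟩, by simp [← h0, hδ]⟩
  · obtain ⟨q, hq1, hq2⟩ := exists_rat_btwn (show max (s - δ) 0 < s by
      simp [sub_lt_self _ hδ, h0])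
    refine ⟨q, ⟨?_, ?_⟩, ?_⟩
    · exact le_of_lt (lt_of_le_of_lt (le_max_right _ _) hq1)
    · exact hq2.le.trans hs.2
    · have h1 : s - δ < (q:ℝ) := lt_of_le_of_lt (le_max_left _ _) hq1
      rw [abs_sub_lt_iff]; constructor <;> linarith

private lemma holder_continuousOn {α T C : ℝ} (hα : 0 < α) {x : ℝ → ℝ}
    (hx : ∀ s ∈ Icc (0:ℝ) T, ∀ t ∈ Icc (0:ℝ) T, |x t - x s| ≤ C * |t - s| ^ α) :
    ContinuousOn x (Icc 0 T) := by
  intro s hs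
  rw [Metric.continuousWithinAt_iff]
  intro ε hε
  set C' := max C 0 with hC'
  have hC0 : 0 ≤ C' := le_max_right _ _
  refine ⟨(ε / (C' + 1)) ^ α⁻¹, Real.rpow_pos_of_pos (by positivity) _, fun {t} ht hd => ?_⟩
  have hb : |x t - x s| ≤ C' * |t - s| ^ α := by
    refine (hx s hs t ht).trans (mul_le_mul_of_nonneg_right (le_max_left _ _) ?_)
    positivity
  have hlt : |t - s| ^ α < ((ε / (C' + 1)) ^ α⁻¹) ^ α := by
    apply Real.rpow_lt_rpow (abs_nonneg _) _ hα
    simpa [Real.dist_eq] using hd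
  rw [Real.rpow_inv_rpow (by positivity) (ne_of_gt hα)] at hlt
  have : C' * |t - s| ^ α ≤ C' * (ε / (C' + 1)) := by
    rcases eq_or_lt_of_le hC0 with h | h
    · rw [← h]; simp
    · exact mul_le_mul_of_nonneg_left hlt.le hC0
  have hfin : C' * (ε / (C' + 1)) < ε := by
    rw [mul_div_assoc'] at *
    rw [div_lt_iff₀ (by positivity)]
    nlinarith
  calc dist (x t) (x s) = |x t - x s| := by rw [Real.dist_eq]
    _ ≤ C' * |t - s| ^ α := hb
    _ ≤ C' * (ε / (C' + 1)) := this
    _ < ε := hfin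

private lemma holder_of_rat {αe T N : ℝ} (hT : 0 < T) (hαe : 0 < αe) {x : ℝ → ℝ}
    (hc : ContinuousOn x (Icc 0 T))
    (hq : ∀ q r : ℚ, (q:ℝ) ∈ Icc (0:ℝ) T → (r:ℝ) ∈ Icc (0:ℝ) T →
      |x q - x r| ≤ N * |(q:ℝ) - (r:ℝ)| ^ αe) :
    ∀ s ∈ Icc (0:ℝ) T, ∀ t ∈ Icc (0:ℝ) T, |x t - x s| ≤ N * |t - s| ^ αe := by
  intro s hs t ht
  refine le_of_forall_pos_le_add fun ε hε => ?_
  have hG : Continuous fun p : ℝ × ℝ => N * |p.1 - p.2| ^ αe := by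
    apply continuous_const.mul
    exact ((continuous_fst.sub continuous_snd).abs).rpow_const (fun p => Or.inr hαe.le)
  have hGc : ContinuousAt (fun p : ℝ × ℝ => N * |p.1 - p.2| ^ αe) (t, s) := hG.continuousAt
  rw [Metric.continuousAt_iff] at hGc
  obtain ⟨δ₀, hδ₀, hG0⟩ := hGc (ε/3) (by positivity)
  have hcs := hc s hs; have hct := hc t ht
  rw [Metric.continuousWithinAt_iff] at hcs hct
  obtain ⟨δ₁, hδ₁, h1⟩ := hcs (ε/3) (by positivity)
  obtain ⟨δ₂, hδ₂, h2⟩ := hct (ε/3) (by positivity)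
  set δ := min δ₀ (min δ₁ δ₂) with hδdef
  have hδ : 0 < δ := by positivity
  obtain ⟨qs, hqs, hqsd⟩ := rat_close hT hs hδ
  obtain ⟨qt, hqt, hqtd⟩ := rat_close hT ht hδ
  have e1 : |x qs - x s| < ε/3 := by
    rw [← Real.dist_eq]
    exact h1 hqs (by rw [Real.dist_eq]; exact hqsd.trans_le ((min_le_right _ _).trans (min_le_left _ _)))
  have e2 : |x qt - x t| < ε/3 := by
    rw [← Real.dist_eq]
    exact h2 hqt (by rw [Real.dist_eq]; exact hqtd.trans_le ((min_le_right _ _).trans (min_le_right _ _)))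
  have e3 : N * |(qt:ℝ) - (qs:ℝ)| ^ αe ≤ N * |t - s| ^ αe + ε/3 := by
    have hd : dist ((qt:ℝ), (qs:ℝ)) (t, s) < δ₀ := by
      rw [Prod.dist_eq]
      exact max_lt (lt_of_lt_of_le (by rw [Real.dist_eq]; exact hqtd) (min_le_left _ _))
        (lt_of_lt_of_le (by rw [Real.dist_eq]; exact hqsd) (min_le_left _ _))
    have := hG0 hd
    rw [Real.dist_eq, abs_sub_lt_iff] at this
    linarith [this.1]
  have key := hq qt qs hqt hqs
  have tri1 : |x t - x s| ≤ |x t - x qt| + |x qt - x s| := abs_sub_le _ _ _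
  have tri2 : |x qt - x s| ≤ |x qt - x qs| + |x qs - x s| := abs_sub_le _ _ _
  have e2' : |x t - x qt| < ε/3 := by rw [abs_sub_comm]; exact e2
  linarith




/-- Monotone shift bound: `∫_{[-R,R]} (h(x+δ) - h(x-δ)) dx ≤ 2δ (h(R+δ) - h(-R-δ))`. -/
private lemma mono_shift {h : ℝ → ℝ} (hm : Monotone h) {R δ : ℝ} (hR : 0 ≤ R) (hδ : 0 ≤ δ) :
    ∫⁻ x in Icc (-R) R, ENNReal.ofReal (h (x + δ) - h (x - δ)) ≤
      ENNReal.ofReal (2 * δ * (h (R + δ) - h (-R - δ))) := by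
  have hloc : ∀ a b : ℝ, IntervalIntegrable h volume a b := fun a b =>
    (hm.monotoneOn _).intervalIntegrable
  have hint1 : ∀ a b c : ℝ, IntervalIntegrable (fun x => h (x + c)) volume a b := by
    intro a b c
    simpa using (hloc (a + c) (b + c)).comp_add_right c
  have hIcc : IntegrableOn (fun x => h (x + δ) - h (x - δ)) (Icc (-R) R) := by
    have h1 := (hint1 (-R) R δ).sub (by simpa [sub_eq_add_neg] using hint1 (-R) R (-δ))
    exact (intervalIntegrable_iff_integrableOn_Icc_of_le (by linarith : (-R:ℝ) ≤ R)).mp h1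
  have hnn : 0 ≤ᵐ[volume.restrict (Icc (-R) R)] fun x => h (x + δ) - h (x - δ) :=
    Filter.Eventually.of_forall fun x => sub_nonneg.2 (hm (by linarith))
  rw [← ofReal_integral_eq_lintegral_ofReal hIcc hnn]
  apply ENNReal.ofReal_le_ofReal
  have hRR : (-R:ℝ) ≤ R := by linarith
  rw [integral_Icc_eq_integral_Ioc, ← intervalIntegral.integral_of_le hRR]
  have hsplit : ∫ x in (-R)..R, (h (x + δ) - h (x - δ)) =
      (∫ x in (R - δ)..(R + δ), h x) - ∫ x in (-R - δ)..(-R + δ), h x := by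
    rw [intervalIntegral.integral_sub (hint1 (-R) R δ)
      (by simpa [sub_eq_add_neg] using hint1 (-R) R (-δ))]
    rw [intervalIntegral.integral_comp_add_right h δ]
    have : ∫ x in (-R)..R, h (x - δ) = ∫ x in (-R - δ)..(R - δ), h x := by
      simpa [sub_eq_add_neg] using intervalIntegral.integral_comp_add_right h (-δ)
    rw [this]
    have c1 : (∫ x in (-R + δ)..(R - δ), h x) + ∫ x in (R - δ)..(R + δ), h x =
        ∫ x in (-R + δ)..(R + δ), h x :=
      intervalIntegral.integral_add_adjacent_intervals (hloc _ _) (hloc _ _)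
    have c2 : (∫ x in (-R - δ)..(-R + δ), h x) + ∫ x in (-R + δ)..(R - δ), h x =
        ∫ x in (-R - δ)..(R - δ), h x :=
      intervalIntegral.integral_add_adjacent_intervals (hloc _ _) (hloc _ _)
    linarith
  rw [hsplit]
  have hub : ∫ x in (R - δ)..(R + δ), h x ≤ 2 * δ * h (R + δ) := by
    have := intervalIntegral.integral_mono_on (by linarith : R - δ ≤ R + δ) (hloc _ _)
      intervalIntegrable_const (fun x hx => hm hx.2)
    exact this.trans_eq (by rw [intervalIntegral.integral_const, smul_eq_mul]; ring)
  have hlb : 2 * δ * h (-R - δ) ≤ ∫ x in (-R - δ)..(-R + δ), h x := by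
    have := intervalIntegral.integral_mono_on (by linarith : -R - δ ≤ -R + δ)
      intervalIntegrable_const (hloc _ _) (fun x hx => hm hx.1)
    refine le_trans (le_of_eq ?_) this
    rw [intervalIntegral.integral_const, smul_eq_mul]; ring
  linarith

/-- Density transfer. -/
private lemma density_le {Ω : Type*} [MeasurableSpace Ω] (P : Measure Ω) (c : ℝ≥0∞)
    (Z : Ω → ℝ) (hZ : Measurable Z)
    (hd : ∀ A : Set ℝ, MeasurableSet A → P {ω | Z ω ∈ A} ≤ c * volume A)
    (φ : ℝ → ℝ≥0∞) (hφ : Measurable φ) :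
    ∫⁻ ω, φ (Z ω) ∂P ≤ c * ∫⁻ x, φ x := by
  rw [← lintegral_map hφ hZ]
  have hle : Measure.map Z P ≤ c • volume := by
    refine Measure.le_iff.2 fun A hA => ?_
    rw [Measure.map_apply hZ hA, Measure.smul_apply, smul_eq_mul]
    exact hd A hA
  calc ∫⁻ x, φ x ∂(Measure.map Z P) ≤ ∫⁻ x, φ x ∂(c • volume) := lintegral_mono' hle le_rfl
    _ = c * ∫⁻ x, φ x := lintegral_smul_measure c φ

/-- Oscillation bound for a difference of monotone functions. -/
private lemma osc_bound {p q : ℝ → ℝ} (hp : Monotone p) (hq : Monotone q)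
    {a b c d : ℝ} (h1 : c ≤ a) (h2 : a ≤ d) (h3 : c ≤ b) (h4 : b ≤ d) :
    |(p a - q a) - (p b - q b)| ≤ (p d + q d) - (p c + q c) := by
  have pa1 := hp h1; have pa2 := hp h2; have pb1 := hp h3; have pb2 := hp h4
  have qa1 := hq h1; have qa2 := hq h2; have qb1 := hq h3; have qb2 := hq h4
  rw [abs_le]; constructor <;> linarith

private lemma integrableOn_rpow_sub {r s : ℝ} (hr : -1 < r) :
    IntegrableOn (fun u => (s - u) ^ r) (Ioo 0 s) volume := by
  rcases le_or_gt s 0 with hs | hs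
  · rw [Ioo_eq_empty (by linarith)]; simp [IntegrableOn]
  · have h0 := (intervalIntegral.intervalIntegrable_rpow' (a := 0) (b := s) hr).comp_sub_left s
    simp only [sub_zero, sub_self] at h0
    have := (intervalIntegrable_iff_integrableOn_Ioc_of_le hs.le).mp h0.symm
    exact this.mono_set Ioo_subset_Ioc_self

private lemma lintegral_rpow_sub {r s : ℝ} (hr : -1 < r) (hs : 0 ≤ s) :
    ∫⁻ u in Ioo 0 s, ENNReal.ofReal ((s - u) ^ r) = ENNReal.ofReal (s ^ (r + 1) / (r + 1)) := by
  have hnn : 0 ≤ᵐ[volume.restrict (Ioo 0 s)] fun u => (s - u) ^ r := by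
    rw [Filter.EventuallyLE, ae_restrict_iff' measurableSet_Ioo]
    exact Filter.Eventually.of_forall fun u hu => Real.rpow_nonneg (by linarith [hu.2]) r
  rw [← ofReal_integral_eq_lintegral_ofReal (integrableOn_rpow_sub hr) hnn]
  congr 1
  rw [← integral_Ioc_eq_integral_Ioo, ← intervalIntegral.integral_of_le hs]
  rw [show (fun u => (s - u) ^ r) = (fun u => ((fun x => x ^ r) (s - u))) from rfl,
    intervalIntegral.integral_comp_sub_left (fun x => x ^ r) s]
  simp only [sub_zero, sub_self]
  rw [integral_rpow (Or.inl hr), Real.zero_rpow (by linarith : r + 1 ≠ 0), sub_zero]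

private lemma integrableOn_rpow_add {r s t : ℝ} (hr : -1 < r) :
    IntegrableOn (fun u => (u - s) ^ r) (Ioo s t) volume := by
  rcases le_or_gt t s with hs | hs
  · rw [Ioo_eq_empty (by linarith)]; simp [IntegrableOn]
  · have h0 := (intervalIntegral.intervalIntegrable_rpow' (a := 0) (b := t - s) hr).comp_sub_right s
    simp only [zero_add, sub_add_cancel] at h0
    have := (intervalIntegrable_iff_integrableOn_Ioc_of_le (by linarith : s ≤ t)).mp h0
    exact this.mono_set Ioo_subset_Ioc_self

private lemma lintegral_rpow_add {r s t : ℝ} (hr : -1 < r) (hs : s ≤ t) :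
    ∫⁻ u in Ioo s t, ENNReal.ofReal ((u - s) ^ r) = ENNReal.ofReal ((t - s) ^ (r + 1) / (r + 1)) := by
  have hnn : 0 ≤ᵐ[volume.restrict (Ioo s t)] fun u => (u - s) ^ r := by
    rw [Filter.EventuallyLE, ae_restrict_iff' measurableSet_Ioo]
    exact Filter.Eventually.of_forall fun u hu => Real.rpow_nonneg (by linarith [hu.1]) r
  rw [← ofReal_integral_eq_lintegral_ofReal (integrableOn_rpow_add hr) hnn]
  congr 1
  rw [← integral_Ioc_eq_integral_Ioo, ← intervalIntegral.integral_of_le hs]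
  rw [show (fun u => (u - s) ^ r) = (fun u => ((fun x => x ^ r) (u - s))) from rfl,
    intervalIntegral.integral_comp_sub_right (fun x => x ^ r) s]
  simp only [sub_self]
  rw [integral_rpow (Or.inl hr), Real.zero_rpow (by linarith : r + 1 ≠ 0), sub_zero]

private lemma setIntegral_rpow_add {r s t : ℝ} (hr : -1 < r) (hs : s ≤ t) :
    ∫ u in Ioo s t, (u - s) ^ r = (t - s) ^ (r + 1) / (r + 1) := by
  rw [← integral_Ioc_eq_integral_Ioo, ← intervalIntegral.integral_of_le hs]
  rw [show (fun u => (u - s) ^ r) = (fun u => ((fun x => x ^ r) (u - s))) from rfl,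
    intervalIntegral.integral_comp_sub_right (fun x => x ^ r) s]
  simp only [sub_self]
  rw [integral_rpow (Or.inl hr), Real.zero_rpow (by linarith : r + 1 ≠ 0), sub_zero]




private lemma step1
    {Ω : Type*} [MeasurableSpace Ω] (P : Measure Ω) [IsProbabilityMeasure P]
    (T α β : ℝ) (hT : 0 < T) (hα : α ∈ Set.Ioo (0:ℝ) 1) (hβpos : 0 < β) (hβα : β < α)
    (X : ℝ → Ω → ℝ) (hX : Measurable (Function.uncurry X))
    (hXHolder : ∀ᵐ ω ∂P, HolderOnIcc α T (fun t => X t ω))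
    (g : ℝ → ℝ) (hg0 : ∀ t, 0 ≤ g t) (hgL1 : IntegrableOn g (Set.Icc 0 T))
    (hdens : BoundedDensityAssumption P T X g)
    (p q : ℝ → ℝ) (hp : Monotone p) (hq : Monotone q)
    (f : ℝ → ℝ) (hfpq : ∀ x, f x = p x - q x) :
    ∀ᵐ ω ∂P, (∫⁻ s in Set.Ioo (0:ℝ) T, ∫⁻ u in Set.Ioo (0:ℝ) T,
      (if 0 < u ∧ u < s then
        ENNReal.ofReal ‖(f (X s ω) - f (X u ω)) * (s - u) ^ (-(1 + β))‖ else 0)) < ⊤ := by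
  have hα0 := hα.1
  -- basic measurability
  have hf_meas : Measurable f := by
    have : f = fun x => p x - q x := funext hfpq
    rw [this]; exact hp.measurable.sub hq.measurable
  have hXsec : ∀ t, Measurable fun ω => X t ω := fun t => hX.comp measurable_prodMk_left
  set η := volume.restrict (Set.Ioo (0:ℝ) T) with hη
  set k : ℝ → ℝ → Ω → ℝ≥0∞ := fun s u ω =>
    (if 0 < u ∧ u < s then
        ENNReal.ofReal ‖(f (X s ω) - f (X u ω)) * (s - u) ^ (-(1 + β))‖ else 0) with hk
  have hS : MeasurableSet {z : ℝ × ℝ × Ω | 0 < z.2.1 ∧ z.2.1 < z.1} := by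
    apply MeasurableSet.inter
    · exact measurableSet_lt measurable_const (measurable_fst.comp measurable_snd)
    · exact measurableSet_lt (measurable_fst.comp measurable_snd) measurable_fst
  have hkk : Measurable fun z : ℝ × ℝ × Ω => k z.1 z.2.1 z.2.2 := by
    rw [show (fun z : ℝ × ℝ × Ω => k z.1 z.2.1 z.2.2) = fun z : ℝ × ℝ × Ω =>
      Set.indicator {z : ℝ × ℝ × Ω | 0 < z.2.1 ∧ z.2.1 < z.1}
        (fun z => ENNReal.ofReal
          ‖(f (X z.1 z.2.2) - f (X z.2.1 z.2.2)) * (z.1 - z.2.1) ^ (-(1 + β))‖) z by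
        funext z
        by_cases hz : 0 < z.2.1 ∧ z.2.1 < z.1 <;> simp [hk, hz, Set.indicator_of_mem,
          Set.indicator_of_notMem, Set.mem_setOf_eq]]
    refine Measurable.indicator ?_ hS
    have h1 : Measurable fun z : ℝ × ℝ × Ω => X z.1 z.2.2 :=
      hX.comp (measurable_fst.prodMk (measurable_snd.comp measurable_snd))
    have h2 : Measurable fun z : ℝ × ℝ × Ω => X z.2.1 z.2.2 :=
      hX.comp ((measurable_fst.comp measurable_snd).prodMk (measurable_snd.comp measurable_snd))
    have h3 : Measurable fun z : ℝ × ℝ × Ω => (z.1 - z.2.1) ^ (-(1 + β)) := by fun_prop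
    exact (((((hf_meas.comp h1).sub (hf_meas.comp h2)).mul h3).norm).ennreal_ofReal)
  have hJmeas : Measurable fun z : ℝ × Ω => ∫⁻ u, k z.1 u z.2 ∂η := by
    apply Measurable.lintegral_prod_right (f := fun (z : ℝ × Ω) u => k z.1 u z.2)
    exact hkk.comp ((measurable_fst.comp measurable_fst).prodMk
      (measurable_snd.prodMk (measurable_snd.comp measurable_fst)))
  have hImeas : Measurable fun ω => ∫⁻ s, ∫⁻ u, k s u ω ∂η ∂η := by
    apply Measurable.lintegral_prod_right (f := fun (ω : Ω) s => ∫⁻ u, k s u ω ∂η)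
    exact hJmeas.comp (measurable_snd.prodMk measurable_fst)
  -- the events A N
  set A : ℕ → Set Ω := fun N => {ω |
    (∀ qr : ℚ × ℚ, (qr.1:ℝ) ∈ Set.Icc (0:ℝ) T → (qr.2:ℝ) ∈ Set.Icc (0:ℝ) T →
      |X qr.1 ω - X qr.2 ω| ≤ (N:ℝ) * |(qr.1:ℝ) - (qr.2:ℝ)| ^ α) ∧ |X 0 ω| ≤ (N:ℝ)} with hA
  have hAmeas : ∀ N, MeasurableSet (A N) := by
    intro N
    apply MeasurableSet.inter
    · show MeasurableSet {ω | ∀ qr : ℚ × ℚ, (qr.1:ℝ) ∈ Set.Icc (0:ℝ) T →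
        (qr.2:ℝ) ∈ Set.Icc (0:ℝ) T → |X qr.1 ω - X qr.2 ω| ≤ (N:ℝ) * |(qr.1:ℝ) - (qr.2:ℝ)| ^ α}
      rw [Set.setOf_forall]
      refine MeasurableSet.iInter fun qr => ?_
      by_cases h1 : (qr.1:ℝ) ∈ Set.Icc (0:ℝ) T
      · by_cases h2 : (qr.2:ℝ) ∈ Set.Icc (0:ℝ) T
        · simp only [h1, h2, forall_true_left]
          exact measurableSet_le (((hXsec _).sub (hXsec _)).abs) measurable_const
        · simp [h2]
      · simp [h1]
    · exact measurableSet_le ((hXsec 0).abs) measurable_const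
  have hcover : ∀ᵐ ω ∂P, ∃ N : ℕ, ω ∈ A N := by
    filter_upwards [hXHolder] with ω ⟨C, hC⟩
    refine ⟨⌈max C |X 0 ω|⌉₊, fun qr h1 h2 => ?_, ?_⟩
    · refine (hC _ h2 _ h1).trans (mul_le_mul_of_nonneg_right ?_ (by positivity))
      exact ((le_max_left _ _).trans (Nat.le_ceil _))
    · exact ((le_max_right _ _).trans (Nat.le_ceil _))
  have key : ∀ N : ℕ, ∫⁻ ω in A N, (∫⁻ s, ∫⁻ u, k s u ω ∂η ∂η) ∂P ≠ ⊤ := by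
    intro N
    set P' := P.restrict (A N) with hP'
    set R : ℝ := N + N * T ^ α with hRdef
    have hR : 0 ≤ R := by positivity
    set h : ℝ → ℝ := fun x => p x + q x with hhdef
    have hmono : Monotone h := fun a b hab => add_le_add (hp hab) (hq hab)
    set D : ℝ := h (2 * R) - h (-(2 * R)) with hDdef
    have hD : 0 ≤ D := sub_nonneg.2 (hmono (by linarith))
    have hANH : ∀ᵐ ω ∂P', ∀ a ∈ Set.Icc (0:ℝ) T, ∀ b ∈ Set.Icc (0:ℝ) T,
        |X a ω - X b ω| ≤ (N:ℝ) * |a - b| ^ α := by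
      filter_upwards [ae_restrict_of_ae hXHolder, self_mem_ae_restrict (hAmeas N)] with ω hH hmem
      obtain ⟨C, hC⟩ := hH
      have hcont := holder_continuousOn hα0 hC
      have hext := holder_of_rat hT hα0 hcont (fun q' r' hq' hr' => hmem.1 (q', r') hq' hr')
      intro a ha b hb
      exact hext b hb a ha
    have hXR : ∀ᵐ ω ∂P', ∀ a ∈ Set.Icc (0:ℝ) T, X a ω ∈ Set.Icc (-R) R := by
      filter_upwards [hANH, self_mem_ae_restrict (hAmeas N)] with ω hH hmem
      intro a ha
      have h1 : |X a ω - X 0 ω| ≤ (N:ℝ) * |a - 0| ^ α :=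
        hH a ha 0 ⟨le_refl 0, hT.le⟩
      have h2 : |a - 0| ^ α ≤ T ^ α := by
        rw [sub_zero, abs_of_nonneg ha.1]
        exact Real.rpow_le_rpow ha.1 ha.2 hα0.le
      have h3 : |X a ω - X 0 ω| ≤ (N:ℝ) * T ^ α :=
        h1.trans (mul_le_mul_of_nonneg_left h2 (Nat.cast_nonneg N))
      have h4 := hmem.2
      rw [abs_le] at h3 h4
      rw [Set.mem_Icc, hRdef]
      constructor <;> [linarith [h3.1, h4.1]; linarith [h3.2, h4.2]]
    have hsu : ∀ s ∈ Set.Ioo (0:ℝ) T,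
        (∀ B : Set ℝ, MeasurableSet B → P {ω | X s ω ∈ B} ≤ ENNReal.ofReal (g s) * volume B) →
        ∀ u ∈ Set.Ioo (0:ℝ) s, ∫⁻ ω, k s u ω ∂P' ≤
          ENNReal.ofReal (g s) *
            (ENNReal.ofReal (2 * N * D) * ENNReal.ofReal ((s - u) ^ (α - (1 + β)))) := by
      intro s hs hdenss u hu
      have hsu0 : (0:ℝ) < s - u := by linarith [hu.2]
      set δ : ℝ := N * (s - u) ^ α with hδdef
      have hδ0 : 0 ≤ δ := by positivity
      have hδR : δ ≤ R := by
        have : (s - u) ^ α ≤ T ^ α :=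
          Real.rpow_le_rpow hsu0.le (by linarith [hu.1, hs.2]) hα0.le
        have := mul_le_mul_of_nonneg_left this (Nat.cast_nonneg N)
        rw [hRdef]
        linarith [Nat.cast_nonneg (α := ℝ) N]
      set φ : ℝ → ℝ≥0∞ :=
        (Set.Icc (-R) R).indicator (fun x => ENNReal.ofReal (h (x + δ) - h (x - δ))) with hφdef
      have hφmeas : Measurable φ := by
        refine Measurable.indicator ?_ measurableSet_Icc
        exact ((hmono.measurable.comp (by fun_prop : Measurable fun x : ℝ => x + δ)).sub
          (hmono.measurable.comp (by fun_prop : Measurable fun x : ℝ => x - δ))).ennreal_ofReal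
      have hptw : ∀ᵐ ω ∂P', k s u ω ≤ φ (X s ω) * ENNReal.ofReal ((s - u) ^ (-(1 + β))) := by
        filter_upwards [hANH, hXR] with ω hH hXRw
        have hsIcc : s ∈ Set.Icc (0:ℝ) T := ⟨hs.1.le, hs.2.le⟩
        have huIcc : u ∈ Set.Icc (0:ℝ) T := ⟨hu.1.le, by linarith [hu.2, hs.2]⟩
        have hXs := hXRw s hsIcc
        have hdist : |X s ω - X u ω| ≤ δ := by
          have hb := hH s hsIcc u huIcc
          rwa [abs_of_pos hsu0] at hb
        rw [abs_le] at hdist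
        have hosc : |f (X s ω) - f (X u ω)| ≤ h (X s ω + δ) - h (X s ω - δ) := by
          rw [hfpq, hfpq, hhdef]
          exact osc_bound hp hq (by linarith) (by linarith) (by linarith [hdist.1])
            (by linarith [hdist.2])
        have hif : k s u ω =
            ENNReal.ofReal ‖(f (X s ω) - f (X u ω)) * (s - u) ^ (-(1 + β))‖ := by
          rw [hk]; exact if_pos ⟨hu.1, hu.2⟩
        rw [hif]
        have hnorm : ‖(f (X s ω) - f (X u ω)) * (s - u) ^ (-(1 + β))‖ =
            |f (X s ω) - f (X u ω)| * (s - u) ^ (-(1 + β)) := by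
          rw [Real.norm_eq_abs, abs_mul, abs_of_nonneg (Real.rpow_nonneg hsu0.le _)]
        rw [hnorm, ENNReal.ofReal_mul (abs_nonneg _)]
        refine mul_le_mul_left ?_ _
        rw [hφdef]
        rw [Set.indicator_of_mem hXs]
        exact ENNReal.ofReal_le_ofReal hosc
      have hint : ∫⁻ x, φ x ≤ ENNReal.ofReal (2 * N * D) * ENNReal.ofReal ((s - u) ^ α) := by
        rw [hφdef, lintegral_indicator measurableSet_Icc]
        refine (mono_shift hmono hR hδ0).trans ?_
        rw [← ENNReal.ofReal_mul (by positivity)]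
        apply ENNReal.ofReal_le_ofReal
        have hhb : h (R + δ) - h (-R - δ) ≤ D := by
          rw [hDdef]
          have l1 : h (R + δ) ≤ h (2 * R) := hmono (by linarith)
          have l2 : h (-(2 * R)) ≤ h (-R - δ) := hmono (by linarith)
          linarith
        calc 2 * δ * (h (R + δ) - h (-R - δ)) ≤ 2 * δ * D := by
              apply mul_le_mul_of_nonneg_left hhb (by positivity)
          _ = 2 * N * D * (s - u) ^ α := by rw [hδdef]; ring
      calc ∫⁻ ω, k s u ω ∂P'
          ≤ ∫⁻ ω, φ (X s ω) * ENNReal.ofReal ((s - u) ^ (-(1 + β))) ∂P' :=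
            lintegral_mono_ae hptw
        _ = (∫⁻ ω, φ (X s ω) ∂P') * ENNReal.ofReal ((s - u) ^ (-(1 + β))) :=
            lintegral_mul_const _ (hφmeas.comp (hXsec s))
        _ ≤ (ENNReal.ofReal (g s) * ∫⁻ x, φ x) * ENNReal.ofReal ((s - u) ^ (-(1 + β))) := by
            refine mul_le_mul_left ?_ _
            refine le_trans (lintegral_mono' Measure.restrict_le_self le_rfl) ?_
            exact density_le P _ _ (hXsec s) hdenss φ hφmeas
        _ ≤ (ENNReal.ofReal (g s) *
              (ENNReal.ofReal (2 * N * D) * ENNReal.ofReal ((s - u) ^ α))) *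
              ENNReal.ofReal ((s - u) ^ (-(1 + β))) := by
            exact mul_le_mul_left (mul_le_mul_right hint _) _
        _ = ENNReal.ofReal (g s) *
              (ENNReal.ofReal (2 * N * D) * ENNReal.ofReal ((s - u) ^ (α - (1 + β)))) := by
            rw [mul_assoc, mul_assoc, ← ENNReal.ofReal_mul (Real.rpow_nonneg hsu0.le _),
              ← Real.rpow_add hsu0]
            ring_nf
    -- Fubini swaps and assembly
    have swap1 : ∫⁻ ω, (∫⁻ s, ∫⁻ u, k s u ω ∂η ∂η) ∂P' =
        ∫⁻ s, (∫⁻ ω, ∫⁻ u, k s u ω ∂η ∂P') ∂η := by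
      apply lintegral_lintegral_swap (f := fun ω s => ∫⁻ u, k s u ω ∂η)
      exact (hJmeas.comp measurable_swap).aemeasurable
    have swap2 : ∀ s, ∫⁻ ω, ∫⁻ u, k s u ω ∂η ∂P' = ∫⁻ u, ∫⁻ ω, k s u ω ∂P' ∂η := by
      intro s
      apply lintegral_lintegral_swap (f := fun ω u => k s u ω)
      exact (hkk.comp ((measurable_const.prodMk
        (measurable_snd.prodMk measurable_fst)) :
          Measurable fun z : Ω × ℝ => (s, z.2, z.1))).aemeasurable
    set Ctot : ℝ≥0∞ := ENNReal.ofReal (2 * N * D) * ENNReal.ofReal (T ^ (α - β) / (α - β))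
      with hCtot
    have hdens' : ∀ᵐ s ∂η, ∀ B : Set ℝ, MeasurableSet B →
        P {ω | X s ω ∈ B} ≤ ENNReal.ofReal (g s) * volume B := by
      rw [hη]
      exact ae_mono (Measure.restrict_mono Set.Ioo_subset_Icc_self le_rfl) hdens
    have hsbound : ∀ᵐ s ∂η, (∫⁻ u, ∫⁻ ω, k s u ω ∂P' ∂η) ≤ ENNReal.ofReal (g s) * Ctot := by
      filter_upwards [hdens', self_mem_ae_restrict (measurableSet_Ioo (a := (0:ℝ)) (b := T))]
        with s hds hsmem
      set F : ℝ → ℝ≥0∞ := fun u => ∫⁻ ω, k s u ω ∂P' with hF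
      have hzero : ∀ u, u ∉ Set.Ioo (0:ℝ) s → F u = 0 := by
        intro u hu
        have : k s u = fun _ => 0 := by
          funext ω; rw [hk]
          exact if_neg (by simpa [Set.mem_Ioo] using hu)
        rw [hF]; simp only [this, lintegral_zero]
      have hind : F = (Set.Ioo (0:ℝ) s).indicator F := by
        funext u
        by_cases hu : u ∈ Set.Ioo (0:ℝ) s
        · rw [Set.indicator_of_mem hu]
        · rw [Set.indicator_of_notMem hu, hzero u hu]
      calc ∫⁻ u, F u ∂η = ∫⁻ u, (Set.Ioo (0:ℝ) s).indicator F u ∂η := by rw [← hind]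
        _ = ∫⁻ u in Set.Ioo (0:ℝ) s, F u ∂η := lintegral_indicator measurableSet_Ioo F
        _ = ∫⁻ u in Set.Ioo (0:ℝ) s, F u := by
            rw [hη, Measure.restrict_restrict measurableSet_Ioo,
              Set.inter_eq_self_of_subset_left
                (Set.Ioo_subset_Ioo le_rfl hsmem.2.le)]
        _ ≤ ∫⁻ u in Set.Ioo (0:ℝ) s, ENNReal.ofReal (g s) *
              (ENNReal.ofReal (2 * N * D) * ENNReal.ofReal ((s - u) ^ (α - (1 + β)))) := by
            refine setLIntegral_mono ?_ (fun u hu => hsu s hsmem hds u hu)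
            fun_prop
        _ = ENNReal.ofReal (g s) * (ENNReal.ofReal (2 * N * D) *
              ∫⁻ u in Set.Ioo (0:ℝ) s, ENNReal.ofReal ((s - u) ^ (α - (1 + β)))) := by
            rw [lintegral_const_mul' _ _ ENNReal.ofReal_ne_top,
              lintegral_const_mul' _ _ ENNReal.ofReal_ne_top]
        _ ≤ ENNReal.ofReal (g s) * Ctot := by
            refine mul_le_mul_right ?_ _
            rw [hCtot]
            refine mul_le_mul_right ?_ _
            have heq := lintegral_rpow_sub (r := α - (1 + β)) (s := s)
              (by linarith) hsmem.1.le
            have hexp : α - (1 + β) + 1 = α - β := by ring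
            rw [heq, hexp]
            apply ENNReal.ofReal_le_ofReal
            have : s ^ (α - β) ≤ T ^ (α - β) :=
              Real.rpow_le_rpow hsmem.1.le hsmem.2.le (by linarith)
            gcongr
    have hgfin : ∫⁻ s, ENNReal.ofReal (g s) ∂η < ⊤ := by
      have hle : ∫⁻ s, ENNReal.ofReal (g s) ∂η ≤
          ∫⁻ s in Set.Icc (0:ℝ) T, ENNReal.ofReal (g s) := by
        rw [hη]
        exact lintegral_mono_set Set.Ioo_subset_Icc_self
      refine hle.trans_lt ?_
      have := hgL1.2
      rw [hasFiniteIntegral_iff_norm] at this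
      refine lt_of_eq_of_lt ?_ this
      congr 1
      funext s
      rw [Real.norm_eq_abs, abs_of_nonneg (hg0 s)]
    have hCtot_ne : Ctot ≠ ⊤ := by
      rw [hCtot]
      exact ENNReal.mul_ne_top ENNReal.ofReal_ne_top ENNReal.ofReal_ne_top
    have hmain : ∫⁻ ω in A N, (∫⁻ s, ∫⁻ u, k s u ω ∂η ∂η) ∂P ≤
        (∫⁻ s, ENNReal.ofReal (g s) ∂η) * Ctot := by
      calc ∫⁻ ω in A N, (∫⁻ s, ∫⁻ u, k s u ω ∂η ∂η) ∂P
          = ∫⁻ s, (∫⁻ ω, ∫⁻ u, k s u ω ∂η ∂P') ∂η := swap1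
        _ = ∫⁻ s, (∫⁻ u, ∫⁻ ω, k s u ω ∂P' ∂η) ∂η := lintegral_congr fun s => swap2 s
        _ ≤ ∫⁻ s, ENNReal.ofReal (g s) * Ctot ∂η := lintegral_mono_ae hsbound
        _ = (∫⁻ s, ENNReal.ofReal (g s) ∂η) * Ctot :=
            lintegral_mul_const' Ctot _ hCtot_ne
    exact ne_top_of_le_ne_top (ENNReal.mul_ne_top hgfin.ne hCtot_ne) hmain
  have hfin : ∀ N : ℕ, ∀ᵐ ω ∂P, ω ∈ A N → (∫⁻ s, ∫⁻ u, k s u ω ∂η ∂η) < ⊤ := by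
    intro N
    rw [← ae_restrict_iff' (hAmeas N)]
    exact ae_lt_top hImeas (key N)
  rw [show (fun ω => (∫⁻ s in Set.Ioo (0:ℝ) T, ∫⁻ u in Set.Ioo (0:ℝ) T,
      (if 0 < u ∧ u < s then
        ENNReal.ofReal ‖(f (X s ω) - f (X u ω)) * (s - u) ^ (-(1 + β))‖ else 0)) < ⊤)
    = fun ω => (∫⁻ s, ∫⁻ u, k s u ω ∂η ∂η) < ⊤ from rfl]
  have hfin' : ∀ᵐ ω ∂P, ∀ N : ℕ, ω ∈ A N → (∫⁻ s, ∫⁻ u, k s u ω ∂η ∂η) < ⊤ :=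
    (ae_all_iff).2 hfin
  filter_upwards [hcover, hfin'] with ω hN hfa
  obtain ⟨N, hNmem⟩ := hN
  exact hfa N hNmem

/-- existence of the generalized Lebesgue–Stieltjes integral `∫₀^T f(X_s) dY_s`:
almost surely, the Weyl fractional derivatives are defined for a.e. `s ∈ (0,T)` and their
product `φ` is Lebesgue integrable on `(0,T)`. -/
theorem gLS_integral_exists
    {Ω : Type*} [MeasurableSpace Ω] (P : Measure Ω) [IsProbabilityMeasure P]
    (T α γ β : ℝ) (hT : 0 < T) (hα : α ∈ Set.Ioo (0:ℝ) 1) (hγ : γ ∈ Set.Ioo (0:ℝ) 1)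
    (hαγ : 1 < α + γ) (hβ : β ∈ Set.Ioo (1 - γ) α)
    (X : ℝ → Ω → ℝ) (hX : Measurable (Function.uncurry X))
    (hXHolder : ∀ᵐ ω ∂P, HolderOnIcc α T (fun t => X t ω))
    (g : ℝ → ℝ) (hg0 : ∀ t, 0 ≤ g t) (hgL1 : IntegrableOn g (Set.Icc 0 T))
    (hdens : BoundedDensityAssumption P T X g)
    (f : ℝ → ℝ) (hf : LocallyBoundedVariationOn f Set.univ)
    (Y : ℝ → Ω → ℝ) (hYHolder : ∀ᵐ ω ∂P, HolderOnIcc γ T (fun t => Y t ω)) :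
    ∀ᵐ ω ∂P,
      (∀ᵐ s ∂(volume.restrict (Set.Ioo (0:ℝ) T)),
        IntegrableOn (fun u => (f (X s ω) - f (X u ω)) * (s - u) ^ (-(1 + β)))
          (Set.Ioo (0:ℝ) s) ∧
        IntegrableOn (fun u => (Y s ω - Y u ω) * (u - s) ^ (-(2 - β))) (Set.Ioo s T)) ∧
      IntegrableOn (fun s =>
          (f (X s ω) * s ^ (-β) +
            β * ∫ u in Set.Ioo (0:ℝ) s, (f (X s ω) - f (X u ω)) * (s - u) ^ (-(1 + β))) *
          ((Y s ω - Y T ω) * (T - s) ^ (-(1 - β)) +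
            (1 - β) * ∫ u in Set.Ioo s T, (Y s ω - Y u ω) * (u - s) ^ (-(2 - β))))
        (Set.Ioo (0:ℝ) T) := by
  obtain ⟨p, q, hpm, hqm, hfpq'⟩ := hf.exists_monotoneOn_sub_monotoneOn
  have hp : Monotone p := monotoneOn_univ.1 hpm
  have hq : Monotone q := monotoneOn_univ.1 hqm
  have hfpq : ∀ x, f x = p x - q x := fun x => by rw [hfpq']; rfl
  have hβpos : 0 < β := by have := hβ.1; have := hγ.2; linarith
  have hβ1 : β < 1 := lt_trans hβ.2 hα.2
  have hγβ : 1 < γ + β := by have := hβ.1; linarith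
  have hstep1 := step1 P T α β hT hα hβpos hβ.2 X hX hXHolder g hg0 hgL1 hdens
    p q hp hq f hfpq
  have hα0 := hα.1
  have hf_meas : Measurable f := by
    have : f = fun z => p z - q z := funext hfpq
    rw [this]; exact hp.measurable.sub hq.measurable
  set η := volume.restrict (Set.Ioo (0:ℝ) T) with hη
  set h : ℝ → ℝ := fun z => p z + q z with hhdef
  have hmono : Monotone h := fun a b hab => add_le_add (hp hab) (hq hab)
  filter_upwards [hstep1, hXHolder, hYHolder] with ω hI hXH hYH
  set x : ℝ → ℝ := fun t => X t ω with hxdef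
  set y : ℝ → ℝ := fun t => Y t ω with hydef
  obtain ⟨Cx0, hCx0⟩ := hXH
  obtain ⟨Cy0, hCy0⟩ := hYH
  set Cx : ℝ := max Cx0 0 with hCxdef
  set Cy : ℝ := max Cy0 0 with hCydef
  have hCxpos : 0 ≤ Cx := le_max_right _ _
  have hCypos : 0 ≤ Cy := le_max_right _ _
  have hCx : ∀ s ∈ Set.Icc (0:ℝ) T, ∀ t ∈ Set.Icc (0:ℝ) T, |x t - x s| ≤ Cx * |t - s| ^ α :=
    fun s hs t ht => (hCx0 s hs t ht).trans
      (mul_le_mul_of_nonneg_right (le_max_left _ _) (by positivity))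
  have hCy : ∀ s ∈ Set.Icc (0:ℝ) T, ∀ t ∈ Set.Icc (0:ℝ) T, |y t - y s| ≤ Cy * |t - s| ^ γ :=
    fun s hs t ht => (hCy0 s hs t ht).trans
      (mul_le_mul_of_nonneg_right (le_max_left _ _) (by positivity))
  have hycont : ContinuousOn y (Set.Icc 0 T) := holder_continuousOn hγ.1 hCy
  have hxmeas : Measurable x := hX.comp (measurable_id.prodMk measurable_const)
  set k : ℝ → ℝ → ℝ≥0∞ := fun s u =>
    (if 0 < u ∧ u < s then
      ENNReal.ofReal ‖(f (x s) - f (x u)) * (s - u) ^ (-(1 + β))‖ else 0) with hkdef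
  have hI' : (∫⁻ s, ∫⁻ u, k s u ∂η ∂η) < ⊤ := hI
  have hS' : MeasurableSet {z : ℝ × ℝ | 0 < z.2 ∧ z.2 < z.1} :=
    (measurableSet_lt measurable_const measurable_snd).inter
      (measurableSet_lt measurable_snd measurable_fst)
  have hkmeas : Measurable fun z : ℝ × ℝ => k z.1 z.2 := by
    rw [show (fun z : ℝ × ℝ => k z.1 z.2) = Set.indicator {z : ℝ × ℝ | 0 < z.2 ∧ z.2 < z.1}
      (fun z => ENNReal.ofReal ‖(f (x z.1) - f (x z.2)) * (z.1 - z.2) ^ (-(1 + β))‖) by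
        funext z
        by_cases hz : 0 < z.2 ∧ z.2 < z.1 <;>
          simp [hkdef, hz, Set.indicator_of_mem, Set.indicator_of_notMem, Set.mem_setOf_eq]]
    refine Measurable.indicator ?_ hS'
    have h3 : Measurable fun z : ℝ × ℝ => (z.1 - z.2) ^ (-(1 + β)) := by fun_prop
    exact ((((hf_meas.comp (hxmeas.comp measurable_fst)).sub
      (hf_meas.comp (hxmeas.comp measurable_snd))).mul h3).norm).ennreal_ofReal
  have hJmeas : Measurable fun s => ∫⁻ u, k s u ∂η :=
    Measurable.lintegral_prod_right (f := fun s u => k s u) hkmeas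
  have hae1 : ∀ᵐ s ∂η, (∫⁻ u, k s u ∂η) < ⊤ := ae_lt_top hJmeas hI'.ne
  have hkres : ∀ s ∈ Set.Ioo (0:ℝ) T, (∫⁻ u, k s u ∂η) =
      ∫⁻ u in Set.Ioo (0:ℝ) s, ENNReal.ofReal
        ‖(f (x s) - f (x u)) * (s - u) ^ (-(1 + β))‖ := by
    intro s hs
    rw [show (fun u => k s u) = (Set.Ioo (0:ℝ) s).indicator
        (fun u => ENNReal.ofReal ‖(f (x s) - f (x u)) * (s - u) ^ (-(1 + β))‖) by
      funext u
      by_cases hu : u ∈ Set.Ioo (0:ℝ) s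
      · rw [Set.indicator_of_mem hu, hkdef]
        exact if_pos ⟨hu.1, hu.2⟩
      · rw [Set.indicator_of_notMem hu, hkdef]
        exact if_neg (by simpa [Set.mem_Ioo] using hu)]
    rw [lintegral_indicator measurableSet_Ioo, hη,
      Measure.restrict_restrict measurableSet_Ioo,
      Set.inter_eq_self_of_subset_left (Set.Ioo_subset_Ioo le_rfl hs.2.le)]
  -- part 1b ingredients
  have he2 : (-1:ℝ) < γ + β - 2 := by linarith
  have hyaesm : ∀ s ∈ Set.Ioo (0:ℝ) T,
      IntegrableOn (fun u => (y s - y u) * (u - s) ^ (-(2 - β))) (Set.Ioo s T) := by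
    intro s hs
    have hsub : Set.Ioo s T ⊆ Set.Icc (0:ℝ) T := fun u hu => ⟨by linarith [hu.1, hs.1], hu.2.le⟩
    refine Integrable.mono' (g := fun u => Cy * (u - s) ^ (γ + β - 2))
      ((integrableOn_rpow_add he2).const_mul Cy) ?_ ?_
    · refine AEStronglyMeasurable.mul ?_ ((by fun_prop :
        Measurable fun u : ℝ => (u - s) ^ (-(2 - β))).aestronglyMeasurable)
      exact (aestronglyMeasurable_const.sub
        (((hycont.mono hsub).aestronglyMeasurable measurableSet_Ioo)))
    · rw [ae_restrict_iff' measurableSet_Ioo]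
      refine Filter.Eventually.of_forall fun u hu => ?_
      have hus : (0:ℝ) < u - s := by linarith [hu.1]
      have hsIcc : s ∈ Set.Icc (0:ℝ) T := ⟨hs.1.le, hs.2.le⟩
      have huIcc : u ∈ Set.Icc (0:ℝ) T := hsub hu
      have hyb : |y s - y u| ≤ Cy * (u - s) ^ γ := by
        have h1 := hCy u huIcc s hsIcc
        have heq : |s - u| = u - s := by rw [abs_sub_comm]; exact abs_of_pos hus
        rwa [heq] at h1
      rw [Real.norm_eq_abs, abs_mul, abs_of_nonneg (Real.rpow_nonneg hus.le _)]
      calc |y s - y u| * (u - s) ^ (-(2 - β))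
          ≤ (Cy * (u - s) ^ γ) * (u - s) ^ (-(2 - β)) :=
            mul_le_mul_of_nonneg_right hyb (Real.rpow_nonneg hus.le _)
        _ = Cy * (u - s) ^ (γ + β - 2) := by
            rw [mul_assoc, ← Real.rpow_add hus]
            ring_nf
  have part1 : ∀ᵐ s ∂η,
      IntegrableOn (fun u => (f (x s) - f (x u)) * (s - u) ^ (-(1 + β))) (Set.Ioo (0:ℝ) s) ∧
      IntegrableOn (fun u => (y s - y u) * (u - s) ^ (-(2 - β))) (Set.Ioo s T) := by
    filter_upwards [hae1, self_mem_ae_restrict (measurableSet_Ioo (a := (0:ℝ)) (b := T))]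
      with s hfin hsmem
    refine ⟨⟨?_, ?_⟩, hyaesm s hsmem⟩
    · exact (((hf_meas.comp hxmeas).const_sub _).mul
        (by fun_prop : Measurable fun u : ℝ => (s - u) ^ (-(1 + β)))).aestronglyMeasurable
    · rw [hasFiniteIntegral_iff_norm]
      exact lt_of_eq_of_lt (hkres s hsmem).symm hfin
  -- Part 2: integrability of the product
  set Rw : ℝ := |x 0| + Cx * T ^ α with hRwdef
  have hRw : 0 ≤ Rw := by positivity
  have hxB : ∀ s ∈ Set.Icc (0:ℝ) T, x s ∈ Set.Icc (-Rw) Rw := by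
    intro s hs
    have h1 : |x s - x 0| ≤ Cx * |s - 0| ^ α := hCx 0 ⟨le_rfl, hT.le⟩ s hs
    have h2 : |s - 0| ^ α ≤ T ^ α := by
      rw [sub_zero, abs_of_nonneg hs.1]
      exact Real.rpow_le_rpow hs.1 hs.2 hα0.le
    have h3 : |x s - x 0| ≤ Cx * T ^ α := h1.trans (mul_le_mul_of_nonneg_left h2 hCxpos)
    rw [Set.mem_Icc]
    rw [abs_le] at h3
    constructor <;> [linarith [neg_abs_le (x 0), h3.1]; linarith [le_abs_self (x 0), h3.2]]
  set M : ℝ := |f (x 0)| + (h Rw - h (-Rw)) with hMdef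
  have hM0 : 0 ≤ M := add_nonneg (abs_nonneg _) (sub_nonneg.2 (hmono (by linarith)))
  have hfb : ∀ s ∈ Set.Icc (0:ℝ) T, |f (x s)| ≤ M := by
    intro s hs
    have hosc : |f (x s) - f (x 0)| ≤ h Rw - h (-Rw) := by
      rw [hfpq, hfpq, hhdef]
      have hxs := hxB s hs
      have hx0 := hxB 0 ⟨le_rfl, hT.le⟩
      exact osc_bound hp hq hxs.1 hxs.2 hx0.1 hx0.2
    calc |f (x s)| = |f (x 0) + (f (x s) - f (x 0))| := by ring_nf
      _ ≤ |f (x 0)| + |f (x s) - f (x 0)| := abs_add_le _ _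
      _ ≤ M := by rw [hMdef]; linarith
  set ψ : ℝ → ℝ := fun s => (∫⁻ u, k s u ∂η).toReal with hψdef
  have hψmeas : Measurable ψ := hJmeas.ennreal_toReal
  have hψnn : ∀ s, 0 ≤ ψ s := fun s => ENNReal.toReal_nonneg
  have hψint : IntegrableOn ψ (Set.Ioo (0:ℝ) T) := by
    refine ⟨hψmeas.aestronglyMeasurable, ?_⟩
    rw [hasFiniteIntegral_iff_norm]
    have heq : ∫⁻ s, ENNReal.ofReal ‖ψ s‖ ∂η = ∫⁻ s, (∫⁻ u, k s u ∂η) ∂η := by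
      refine lintegral_congr_ae ?_
      filter_upwards [hae1] with s hfin
      rw [hψdef, Real.norm_eq_abs, abs_of_nonneg ENNReal.toReal_nonneg,
        ENNReal.ofReal_toReal hfin.ne]
    exact lt_of_eq_of_lt heq hI'
  have hF1le : ∀ s ∈ Set.Ioo (0:ℝ) T,
      ‖∫ u in Set.Ioo (0:ℝ) s, (f (x s) - f (x u)) * (s - u) ^ (-(1 + β))‖ ≤ ψ s := by
    intro s hs
    refine (norm_integral_le_lintegral_norm _).trans ?_
    simp only [hψdef]
    rw [← hkres s hs]
  have hγβ1 : (0:ℝ) < γ + β - 1 := by linarith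
  set K2 : ℝ := Cy * T ^ (γ + β - 1) + (1 - β) * (Cy * (T ^ (γ + β - 1) / (γ + β - 1)))
    with hK2def
  have hybnd : ∀ s ∈ Set.Ioo (0:ℝ) T, ∀ u ∈ Set.Ioo s T,
      ‖(y s - y u) * (u - s) ^ (-(2 - β))‖ ≤ Cy * (u - s) ^ (γ + β - 2) := by
    intro s hs u hu
    have hus : (0:ℝ) < u - s := by linarith [hu.1]
    have hsIcc : s ∈ Set.Icc (0:ℝ) T := ⟨hs.1.le, hs.2.le⟩
    have huIcc : u ∈ Set.Icc (0:ℝ) T := ⟨by linarith [hu.1, hs.1], hu.2.le⟩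
    have hyb : |y s - y u| ≤ Cy * (u - s) ^ γ := by
      have h1 := hCy u huIcc s hsIcc
      have heq2 : |s - u| = u - s := by rw [abs_sub_comm]; exact abs_of_pos hus
      rwa [heq2] at h1
    rw [Real.norm_eq_abs, abs_mul, abs_of_nonneg (Real.rpow_nonneg hus.le _)]
    calc |y s - y u| * (u - s) ^ (-(2 - β))
        ≤ (Cy * (u - s) ^ γ) * (u - s) ^ (-(2 - β)) :=
          mul_le_mul_of_nonneg_right hyb (Real.rpow_nonneg hus.le _)
      _ = Cy * (u - s) ^ (γ + β - 2) := by
          rw [mul_assoc, ← Real.rpow_add hus]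
          ring_nf
  have hG2 : ∀ s ∈ Set.Ioo (0:ℝ) T,
      |(y s - y T) * (T - s) ^ (-(1 - β)) +
        (1 - β) * ∫ u in Set.Ioo s T, (y s - y u) * (u - s) ^ (-(2 - β))| ≤ K2 := by
    intro s hs
    have hTs : (0:ℝ) < T - s := by linarith [hs.2]
    have e1b : |(y s - y T) * (T - s) ^ (-(1 - β))| ≤ Cy * T ^ (γ + β - 1) := by
      rw [abs_mul, abs_of_nonneg (Real.rpow_nonneg hTs.le _)]
      have hyb : |y s - y T| ≤ Cy * (T - s) ^ γ := by
        have h1 := hCy T ⟨hT.le, le_rfl⟩ s ⟨hs.1.le, hs.2.le⟩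
        have heq2 : |s - T| = T - s := by rw [abs_sub_comm]; exact abs_of_pos hTs
        rwa [heq2] at h1
      calc |y s - y T| * (T - s) ^ (-(1 - β))
          ≤ (Cy * (T - s) ^ γ) * (T - s) ^ (-(1 - β)) :=
            mul_le_mul_of_nonneg_right hyb (Real.rpow_nonneg hTs.le _)
        _ = Cy * (T - s) ^ (γ + β - 1) := by
            rw [mul_assoc, ← Real.rpow_add hTs]
            ring_nf
        _ ≤ Cy * T ^ (γ + β - 1) := by
            exact mul_le_mul_of_nonneg_left
              (Real.rpow_le_rpow hTs.le (by linarith [hs.1]) (by linarith)) hCypos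
    have e2b : |∫ u in Set.Ioo s T, (y s - y u) * (u - s) ^ (-(2 - β))| ≤
        Cy * (T ^ (γ + β - 1) / (γ + β - 1)) := by
      have hbd : ‖∫ u in Set.Ioo s T, (y s - y u) * (u - s) ^ (-(2 - β))‖ ≤
          ∫ u in Set.Ioo s T, Cy * (u - s) ^ (γ + β - 2) := by
        refine norm_integral_le_of_norm_le ((integrableOn_rpow_add he2).const_mul Cy) ?_
        rw [ae_restrict_iff' measurableSet_Ioo]
        exact Filter.Eventually.of_forall fun u hu => hybnd s hs u hu
      rw [Real.norm_eq_abs] at hbd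
      refine hbd.trans ?_
      rw [MeasureTheory.integral_const_mul, setIntegral_rpow_add he2 hs.2.le]
      have hexp : γ + β - 2 + 1 = γ + β - 1 := by ring
      rw [hexp]
      refine mul_le_mul_of_nonneg_left ?_ hCypos
      gcongr <;> linarith [hs.1, hTs]
    calc |(y s - y T) * (T - s) ^ (-(1 - β)) +
          (1 - β) * ∫ u in Set.Ioo s T, (y s - y u) * (u - s) ^ (-(2 - β))|
        ≤ |(y s - y T) * (T - s) ^ (-(1 - β))| +
          |(1 - β) * ∫ u in Set.Ioo s T, (y s - y u) * (u - s) ^ (-(2 - β))| := abs_add_le _ _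
      _ ≤ K2 := by
          rw [hK2def]
          refine add_le_add e1b ?_
          rw [abs_mul, abs_of_nonneg (by linarith : (0:ℝ) ≤ 1 - β)]
          exact mul_le_mul_of_nonneg_left e2b (by linarith)
  have hK20 : 0 ≤ K2 := by
    have h0 : (0:ℝ) ≤ Cy * T ^ (γ + β - 1) := by positivity
    have h1 : (0:ℝ) ≤ Cy * (T ^ (γ + β - 1) / (γ + β - 1)) := by positivity
    rw [hK2def]; nlinarith
  have hrpowint : IntegrableOn (fun s : ℝ => s ^ (-β)) (Set.Ioo (0:ℝ) T) :=
    ((intervalIntegrable_iff_integrableOn_Ioc_of_le hT.le).mp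
      (intervalIntegral.intervalIntegrable_rpow' (by linarith))).mono_set Set.Ioo_subset_Ioc_self
  have hbint : IntegrableOn (fun s => (M * s ^ (-β) + β * ψ s) * K2) (Set.Ioo (0:ℝ) T) :=
    ((hrpowint.const_mul M).add (hψint.const_mul β)).mul_const K2
  -- a.e. strong measurability of the product
  set K1f : ℝ × ℝ → ℝ := fun z =>
    if 0 < z.2 ∧ z.2 < z.1 then (f (x z.1) - f (x z.2)) * (z.1 - z.2) ^ (-(1 + β)) else 0
    with hK1fdef
  have hK1meas : Measurable K1f := by
    refine Measurable.ite hS' ?_ measurable_const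
    exact (((hf_meas.comp (hxmeas.comp measurable_fst)).sub
      (hf_meas.comp (hxmeas.comp measurable_snd))).mul (by fun_prop))
  have hF1aesm : AEStronglyMeasurable
      (fun s => ∫ u in Set.Ioo (0:ℝ) s, (f (x s) - f (x u)) * (s - u) ^ (-(1 + β))) η := by
    have base : AEStronglyMeasurable (fun s => ∫ u, K1f (s, u) ∂η) η :=
      (hK1meas.aestronglyMeasurable (μ := η.prod η)).integral_prod_right'
    refine base.congr ?_
    filter_upwards [self_mem_ae_restrict (measurableSet_Ioo (a := (0:ℝ)) (b := T))] with s hs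
    rw [show (fun u => K1f (s, u)) = (Set.Ioo (0:ℝ) s).indicator
        (fun u => (f (x s) - f (x u)) * (s - u) ^ (-(1 + β))) by
      funext u
      by_cases hu : u ∈ Set.Ioo (0:ℝ) s
      · rw [Set.indicator_of_mem hu, hK1fdef]; exact if_pos ⟨hu.1, hu.2⟩
      · rw [Set.indicator_of_notMem hu, hK1fdef]
        exact if_neg (by simpa [Set.mem_Ioo] using hu)]
    rw [integral_indicator measurableSet_Ioo, hη,
      Measure.restrict_restrict measurableSet_Ioo,
      Set.inter_eq_self_of_subset_left (Set.Ioo_subset_Ioo le_rfl hs.2.le)]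
  set yext : ℝ → ℝ := fun t => y (max 0 (min t T)) with hyextdef
  have hmaxcont : Continuous fun t : ℝ => max 0 (min t T) :=
    continuous_const.max (continuous_id.min continuous_const)
  have hyextc : Continuous yext := by
    refine hycont.comp_continuous hmaxcont fun t => ?_
    exact ⟨le_max_left _ _, max_le hT.le (min_le_right t T)⟩
  have hyext_eq : ∀ t ∈ Set.Icc (0:ℝ) T, yext t = y t := by
    intro t ht
    rw [hyextdef]
    simp only [min_eq_left ht.2, max_eq_right ht.1]
  set K2f : ℝ × ℝ → ℝ := fun z =>
    if z.1 < z.2 ∧ z.2 < T then (yext z.1 - yext z.2) * (z.2 - z.1) ^ (-(2 - β)) else 0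
    with hK2fdef
  have hS2 : MeasurableSet {z : ℝ × ℝ | z.1 < z.2 ∧ z.2 < T} :=
    (measurableSet_lt measurable_fst measurable_snd).inter
      (measurableSet_lt measurable_snd measurable_const)
  have hK2meas : Measurable K2f := by
    refine Measurable.ite hS2 ?_ measurable_const
    exact (((hyextc.measurable.comp measurable_fst).sub
      (hyextc.measurable.comp measurable_snd)).mul (by fun_prop))
  have hF2aesm : AEStronglyMeasurable
      (fun s => ∫ u in Set.Ioo s T, (y s - y u) * (u - s) ^ (-(2 - β))) η := by
    have base : AEStronglyMeasurable (fun s => ∫ u, K2f (s, u) ∂η) η :=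
      (hK2meas.aestronglyMeasurable (μ := η.prod η)).integral_prod_right'
    refine base.congr ?_
    filter_upwards [self_mem_ae_restrict (measurableSet_Ioo (a := (0:ℝ)) (b := T))] with s hs
    rw [show (fun u => K2f (s, u)) = (Set.Ioo s T).indicator
        (fun u => (yext s - yext u) * (u - s) ^ (-(2 - β))) by
      funext u
      by_cases hu : u ∈ Set.Ioo s T
      · rw [Set.indicator_of_mem hu, hK2fdef]; exact if_pos ⟨hu.1, hu.2⟩
      · rw [Set.indicator_of_notMem hu, hK2fdef]
        exact if_neg (by simpa [Set.mem_Ioo] using hu)]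
    rw [integral_indicator measurableSet_Ioo, hη,
      Measure.restrict_restrict measurableSet_Ioo,
      Set.inter_eq_self_of_subset_left (Set.Ioo_subset_Ioo hs.1.le le_rfl)]
    refine setIntegral_congr_fun measurableSet_Ioo fun u hu => ?_
    rw [hyext_eq s ⟨hs.1.le, hs.2.le⟩, hyext_eq u ⟨by linarith [hu.1, hs.1], hu.2.le⟩]
  have hyaesm' : AEStronglyMeasurable y η :=
    (hycont.mono Set.Ioo_subset_Icc_self).aestronglyMeasurable measurableSet_Ioo
  have hφaesm : AEStronglyMeasurable (fun s =>
      (f (x s) * s ^ (-β) +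
        β * ∫ u in Set.Ioo (0:ℝ) s, (f (x s) - f (x u)) * (s - u) ^ (-(1 + β))) *
      ((y s - y T) * (T - s) ^ (-(1 - β)) +
        (1 - β) * ∫ u in Set.Ioo s T, (y s - y u) * (u - s) ^ (-(2 - β)))) η := by
    refine AEStronglyMeasurable.mul ?_ ?_
    · exact ((hf_meas.comp hxmeas).aestronglyMeasurable.mul
        (by fun_prop : Measurable fun s : ℝ => s ^ (-β)).aestronglyMeasurable).add
        (hF1aesm.const_mul β)
    · exact (((hyaesm'.sub aestronglyMeasurable_const).mul
        (by fun_prop : Measurable fun s : ℝ => (T - s) ^ (-(1 - β))).aestronglyMeasurable)).add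
        (hF2aesm.const_mul (1 - β))
  refine ⟨part1, ?_⟩
  refine Integrable.mono' hbint hφaesm ?_
  filter_upwards [self_mem_ae_restrict (measurableSet_Ioo (a := (0:ℝ)) (b := T))] with s hs
  have hG1 : |f (x s) * s ^ (-β) +
      β * ∫ u in Set.Ioo (0:ℝ) s, (f (x s) - f (x u)) * (s - u) ^ (-(1 + β))| ≤
      M * s ^ (-β) + β * ψ s := by
    refine (abs_add_le _ _).trans (add_le_add ?_ ?_)
    · rw [abs_mul, abs_of_nonneg (Real.rpow_nonneg hs.1.le _)]
      exact mul_le_mul_of_nonneg_right (hfb s ⟨hs.1.le, hs.2.le⟩) (Real.rpow_nonneg hs.1.le _)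
    · rw [abs_mul, abs_of_pos hβpos]
      refine mul_le_mul_of_nonneg_left ?_ hβpos.le
      have := hF1le s hs
      rwa [Real.norm_eq_abs] at this
  rw [Real.norm_eq_abs, abs_mul]
  exact mul_le_mul hG1 (hG2 s hs) (abs_nonneg _)
    (add_nonneg (mul_nonneg hM0 (Real.rpow_nonneg hs.1.le _))
      (mul_nonneg hβpos.le (hψnn s)))


end
end

section
/- Let T > 0 and α > 1/2. Let (X_t)_{t∈[0,T]} be a jointly measurable real-valued stochastic process whose sample paths are almost surely α-Hölder continuous and which satisfies the bounded-density assumption with some nonnegative g ∈ L¹([0,T]). Let h : ℝ → ℝ be left-continuous and of locally bounded variation, and set F(x) := ∫₀^x h(y) dy. Then for every sequence (π_n) of tagged partitions of [0,T] with mesh |π_n| → 0, the Riemann–Stieltjes sums Σ_{i=1}^{k(n)} h(X_{τ_i^n}) (X_{t_i^n} − X_{t_{i−1}^n}) converge almost surely to F(X_T) − F(X_0); that is, the Itô formula F(X_T) = F(X_0) + ∫₀^T h(X_s) dX_s holds with the pathwise stochastic integral understood as the almost sure limit of Riemann–Stieltjes sums. -/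
/-!
Let `V` be the variation function of `h`, so that `|h b - h a| ≤ V b - V a` for `a ≤ b`. On a
partition interval `[u, v]` of length `d`, Hölder continuity keeps the path within `ρ = K d ^ α` of
`x u`, so the step error `|h (x τ) (x v - x u) - (F (x v) - F (x u))|` is at most
`ρ (V (x u + ρ) - V (x u - ρ))`. If `D / 2 < d ≤ D` with `D = T / 2 ^ m`, then
`ρ ≤ 2 K D ^ (α - 1) d` and the oscillation of `V` near `x u` is dominated at every time
`s ∈ (u, v]` by `ψ_m (x s) = V (x s + r) - V (x s - r)`, `r = 2 K D ^ α`; averaging in time, the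
step error is at most `2 K D ^ (α - 1) ∫_u^v ψ_m (x s) ds`. Hence the error of a partition of mesh at most `T / 2 ^ M` is
bounded by the tail from `M` of `Σ_m 2 K D_m ^ (α - 1) ∫_0^T ψ_m (x s) ds` (with `ψ_m` truncated to
the range `[-R, R]` of the path). By the density bound the `m`-th term has expectation at most
`‖g‖₁ 2 K D_m ^ (α - 1) ∫ ψ_m ≲ D_m ^ (2 α - 1)`, which is summable because `α > 1/2`; so the series
is almost surely finite and its tails vanish.
-/

open MeasureTheory Set Filter intervalIntegral
open scoped ENNReal

noncomputable section

/-- A tagged partition `0 = t_0 < t_1 < … < t_k = T` of `[0,T]` with tags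
`τ_i ∈ [t_{i-1}, t_i]`. -/
structure TaggedPartition (T : ℝ) where
  k : ℕ
  hk : 0 < k
  t : ℕ → ℝ
  tag : ℕ → ℝ
  h0 : t 0 = 0
  hT : t k = T
  mono : ∀ i, i < k → t i < t (i + 1)
  tagmem : ∀ i, i < k → tag i ∈ Set.Icc (t i) (t (i + 1))

/-- The mesh `|π| = max_i (t_i - t_{i-1})` of a tagged partition. -/
def TaggedPartition.mesh {T : ℝ} (π : TaggedPartition T) : ℝ :=
  (Finset.range π.k).sup' (Finset.nonempty_range_iff.mpr π.hk.ne')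
    (fun i => π.t (i + 1) - π.t i)

/-- The Riemann–Stieltjes sum `Σ_i Z(τ_i) (Y(t_i) - Y(t_{i-1}))` along a tagged partition. -/
def TaggedPartition.rsSum {T : ℝ} (π : TaggedPartition T) (Z Y : ℝ → ℝ) : ℝ :=
  ∑ i ∈ Finset.range π.k, Z (π.tag i) * (Y (π.t (i + 1)) - Y (π.t i))


theorem LocallyBoundedVariationOn.intervalIntegrable {f : ℝ → ℝ} {s : Set ℝ} {a b : ℝ}
    (hf : LocallyBoundedVariationOn f s) (hab : uIcc a b ⊆ s) :
    IntervalIntegrable f volume a b := by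
  obtain ⟨p, q, hp, hq, rfl⟩ := hf.exists_monotoneOn_sub_monotoneOn
  exact (hp.mono hab).intervalIntegrable.sub (hq.mono hab).intervalIntegrable

theorem abs_mul_sub_integral_le {f : ℝ → ℝ} {a b c C : ℝ} (hf : IntervalIntegrable f volume a b)
    (hC : ∀ y ∈ uIoc a b, |f c - f y| ≤ C) :
    |f c * (b - a) - ∫ y in a..b, f y| ≤ C * |b - a| := by
  have hsplit : f c * (b - a) - ∫ y in a..b, f y = ∫ y in a..b, (f c - f y) := by
    rw [intervalIntegral.integral_sub intervalIntegrable_const hf,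
      intervalIntegral.integral_const, smul_eq_mul, mul_comm]
  rw [hsplit]
  exact norm_integral_le_of_norm_le_const (f := fun y => f c - f y) hC

theorem Monotone.integral_comp_add_sub_comp_sub_le {G : ℝ → ℝ} (hG : Monotone G) {r : ℝ}
    (hr : 0 ≤ r) (a b : ℝ) :
    ∫ y in a..b, (G (y + r) - G (y - r)) ≤ 2 * r * (G (b + r) - G (a - r)) := by
  have hGi : ∀ u v : ℝ, IntervalIntegrable G volume u v := fun _ _ => hG.intervalIntegrable
  have hupper : ∫ y in (b - r)..(b + r), G y ≤ ∫ _ in (b - r)..(b + r), G (b + r) :=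
    integral_mono_on (by linarith) (hGi _ _) intervalIntegrable_const fun y hy => hG hy.2
  have hlower : ∫ _ in (a - r)..(a + r), G (a - r) ≤ ∫ y in (a - r)..(a + r), G y :=
    integral_mono_on (by linarith) intervalIntegrable_const (hGi _ _) fun y hy => hG hy.1
  have hshift : ∀ e : ℝ, Monotone fun y => G (y + e) := fun e _ _ hxy => hG (by linarith)
  rw [intervalIntegral.integral_sub (hshift r).intervalIntegrable
      (by simpa only [sub_eq_add_neg] using (hshift (-r)).intervalIntegrable),
    integral_comp_add_right G, integral_comp_sub_right G,
    integral_interval_sub_interval_comm' (hGi _ _) (hGi _ _) (hGi _ _)]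
  simp only [intervalIntegral.integral_const, smul_eq_mul] at hupper hlower
  linarith

section StepError

variable {h G : ℝ → ℝ}

theorem abs_sub_le_of_mem_Icc (hG : Monotone G)
    (hhG : ∀ a b, a ≤ b → |h b - h a| ≤ G b - G a) {l u y z : ℝ}
    (hy : y ∈ Icc l u) (hz : z ∈ Icc l u) : |h y - h z| ≤ G u - G l := by
  rcases le_total z y with hzy | hyz
  · linarith [hhG z y hzy, hG hy.2, hG hz.1]
  · rw [abs_sub_comm]
    linarith [hhG y z hyz, hG hz.2, hG hy.1]

theorem abs_mul_sub_sub_le (hG : Monotone G) (hhG : ∀ a b, a ≤ b → |h b - h a| ≤ G b - G a)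
    (hint : ∀ a b, IntervalIntegrable h volume a b) {F : ℝ → ℝ}
    (hF : ∀ x, F x = ∫ y in (0:ℝ)..x, h y) {a b c ρ : ℝ} (hb : |b - a| ≤ ρ) (hc : |c - a| ≤ ρ) :
    |h c * (b - a) - (F b - F a)| ≤ ρ * (G (a + ρ) - G (a - ρ)) := by
  have hρ : 0 ≤ ρ := (abs_nonneg _).trans hb
  have hwindow : uIcc a b ⊆ Icc (a - ρ) (a + ρ) :=
    uIcc_subset_Icc (mem_Icc_iff_abs_le.1 (by simpa using hρ))
      (mem_Icc_iff_abs_le.1 (by rwa [abs_sub_comm]))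
  have hFab : F b - F a = ∫ y in a..b, h y := by
    rw [hF, hF, integral_interval_sub_left (hint 0 b) (hint 0 a)]
  rw [hFab]
  calc |h c * (b - a) - ∫ y in a..b, h y| ≤ (G (a + ρ) - G (a - ρ)) * |b - a| :=
        abs_mul_sub_integral_le (hint a b) fun y hy =>
          abs_sub_le_of_mem_Icc hG hhG (mem_Icc_iff_abs_le.1 (by rwa [abs_sub_comm]))
            (hwindow (Ioc_subset_Icc_self hy))
    _ ≤ ρ * (G (a + ρ) - G (a - ρ)) := by
        rw [mul_comm]
        exact mul_le_mul_of_nonneg_right hb (by linarith [hG (by linarith : a - ρ ≤ a + ρ)])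

end StepError

def dyadicScale (T : ℝ) (m : ℕ) : ℝ := T / 2 ^ m

section Dyadic

variable {T : ℝ}

theorem dyadicScale_pos (hT : 0 < T) (m : ℕ) : 0 < dyadicScale T m := by
  unfold dyadicScale; positivity

theorem dyadicScale_le_self (hT : 0 ≤ T) (m : ℕ) : dyadicScale T m ≤ T :=
  div_le_self hT (one_le_pow₀ one_le_two)

theorem exists_dyadicScale_between {d : ℝ} (hd : 0 < d) {M : ℕ}
    (hdM : d ≤ dyadicScale T M) :
    ∃ m, M ≤ m ∧ dyadicScale T m / 2 < d ∧ d ≤ dyadicScale T m := by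
  obtain ⟨n, hle, hlt⟩ := exists_nat_pow_near ((one_le_div hd).2 hdM) one_lt_two
  have hscale : dyadicScale T (M + n) = dyadicScale T M / 2 ^ n := by
    rw [dyadicScale, dyadicScale, pow_add, div_div]
  refine ⟨M + n, le_self_add, ?_, ?_⟩
  · rw [div_lt_iff₀ hd] at hlt
    rw [hscale, div_div, ← pow_succ, div_lt_iff₀ (by positivity)]
    linarith
  · rw [le_div_iff₀ hd] at hle
    rwa [hscale, le_div_iff₀ (by positivity), mul_comm]

theorem summable_dyadicScale_rpow (hT : 0 ≤ T) {β : ℝ} (hβ : 0 < β) :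
    Summable fun m => dyadicScale T m ^ β := by
  have hq : (0:ℝ) ≤ (2 ^ β)⁻¹ := by positivity
  have hq1 : (2 ^ β)⁻¹ < (1:ℝ) := inv_lt_one_of_one_lt₀ (Real.one_lt_rpow one_lt_two hβ)
  have hgeom : (fun m => dyadicScale T m ^ β) = fun m => T ^ β * ((2 ^ β)⁻¹) ^ m := by
    funext m
    rw [dyadicScale, Real.div_rpow hT (by positivity), ← Real.rpow_natCast,
      ← Real.rpow_mul zero_le_two, mul_comm, Real.rpow_mul zero_le_two, Real.rpow_natCast,
      inv_pow, div_eq_mul_inv]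
  rw [hgeom]
  exact (summable_geometric_of_lt_one hq hq1).mul_left (T ^ β)

end Dyadic

theorem rpow_le_two_mul_rpow_sub_one_mul {D d α : ℝ} (hα : 0 < α) (hd : 0 < d) (hDd : D / 2 < d)
    (hdD : d ≤ D) : d ^ α ≤ 2 * D ^ (α - 1) * d := by
  have hD : 0 < D := hd.trans_le hdD
  calc d ^ α ≤ D ^ α := Real.rpow_le_rpow hd.le hdD hα.le
    _ = D ^ (α - 1) * D := by rw [Real.rpow_sub_one hD.ne', div_mul_cancel₀ _ hD.ne']
    _ ≤ D ^ (α - 1) * (2 * d) := by gcongr; linarith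
    _ = 2 * D ^ (α - 1) * d := by ring

def windowIncrement (G : ℝ → ℝ) (R r : ℝ) : ℝ → ℝ≥0∞ :=
  (Icc (-R) R).indicator fun y => ENNReal.ofReal (G (y + r) - G (y - r))

section WindowIncrement

variable {G : ℝ → ℝ}

theorem Monotone.measurable_windowIncrement (hG : Monotone G) (R r : ℝ) :
    Measurable (windowIncrement G R r) :=
  (ENNReal.measurable_ofReal.comp
    ((hG.measurable.comp (measurable_add_const r)).sub
      (hG.measurable.comp (measurable_sub_const r)))).indicator measurableSet_Icc

theorem Monotone.ofReal_sub_le_windowIncrement (hG : Monotone G) {R r a ρ y : ℝ} (hy : |y| ≤ R)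
    (hya : |y - a| ≤ ρ) (hρr : 2 * ρ ≤ r) :
    ENNReal.ofReal (G (a + ρ) - G (a - ρ)) ≤ windowIncrement G R r y := by
  rw [windowIncrement, indicator_of_mem (show y ∈ Icc (-R) R from abs_le.1 hy)]
  have := abs_le.1 hya
  exact ENNReal.ofReal_le_ofReal (sub_le_sub (hG (by linarith)) (hG (by linarith)))

theorem Monotone.lintegral_windowIncrement_le (hG : Monotone G) {R r : ℝ} (hR : 0 ≤ R)
    (hr : 0 ≤ r) :
    ∫⁻ y, windowIncrement G R r y ≤ ENNReal.ofReal (2 * r * (G (R + r) - G (-R - r))) := by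
  have hshift : ∀ e : ℝ, Monotone fun y => G (y + e) := fun e _ _ hxy => hG (by linarith)
  have hint : IntegrableOn (fun y => G (y + r) - G (y - r)) (Ioc (-R) R) :=
    ((hshift r).intervalIntegrable.sub
      (by simpa only [sub_eq_add_neg] using (hshift (-r)).intervalIntegrable)).1
  rw [windowIncrement, lintegral_indicator measurableSet_Icc, ← setLIntegral_congr Ioc_ae_eq_Icc,
    ← ofReal_integral_eq_lintegral_ofReal hint
      (ae_of_all _ fun y => sub_nonneg.2 (hG (by linarith))),
    ← intervalIntegral.integral_of_le (by linarith)]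
  exact ENNReal.ofReal_le_ofReal (hG.integral_comp_add_sub_comp_sub_le hr (-R) R)

end WindowIncrement

namespace TaggedPartition

variable {T : ℝ} (π : TaggedPartition T)

theorem monotoneOn_t : MonotoneOn π.t (Iic π.k) :=
  monotoneOn_of_le_succ ordConnected_Iic fun i _ _ hi =>
    (π.mono i (Order.succ_le_iff.1 hi)).le

theorem t_le_t {i j : ℕ} (hij : i ≤ j) (hj : j ≤ π.k) : π.t i ≤ π.t j :=
  π.monotoneOn_t (hij.trans hj) hj hij

theorem t_mem_Icc {i : ℕ} (hi : i ≤ π.k) : π.t i ∈ Icc 0 T := by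
  constructor
  · simpa only [π.h0] using π.t_le_t (Nat.zero_le i) hi
  · simpa only [π.hT] using π.t_le_t hi le_rfl

theorem t_succ_sub_le_mesh {i : ℕ} (hi : i < π.k) : π.t (i + 1) - π.t i ≤ π.mesh :=
  Finset.le_sup' (fun i => π.t (i + 1) - π.t i) (Finset.mem_range.2 hi)

theorem rsSum_sub_sub_eq_sum (Z Y Φ : ℝ → ℝ) :
    π.rsSum Z Y - (Φ T - Φ 0) = ∑ i ∈ Finset.range π.k,
      (Z (π.tag i) * (Y (π.t (i + 1)) - Y (π.t i)) - (Φ (π.t (i + 1)) - Φ (π.t i))) := by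
  rw [rsSum, Finset.sum_sub_distrib, Finset.sum_range_sub (fun i => Φ (π.t i)), π.hT, π.h0]

theorem sum_setLIntegral_Ioc_le (f : ℝ → ℝ≥0∞) :
    ∑ i ∈ Finset.range π.k, ∫⁻ s in Ioc (π.t i) (π.t (i + 1)), f s ≤ ∫⁻ s in Icc 0 T, f s := by
  have hdisj : (Finset.range π.k : Set ℕ).PairwiseDisjoint fun i => Ioc (π.t i) (π.t (i + 1)) := by
    intro i hi j hj hij
    simp only [Finset.coe_range, mem_Iio] at hi hj
    rcases lt_or_gt_of_ne hij with hlt | hlt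
    · exact Ioc_disjoint_Ioc_of_le (π.t_le_t hlt hj.le)
    · exact (Ioc_disjoint_Ioc_of_le (π.t_le_t hlt hi.le)).symm
  rw [← lintegral_biUnion_finset hdisj (fun _ _ => measurableSet_Ioc)]
  refine lintegral_mono_set (iUnion₂_subset fun i hi => ?_)
  have hi := Finset.mem_range.1 hi
  exact Ioc_subset_Icc_self.trans
    (Icc_subset_Icc (π.t_mem_Icc hi.le).1 (π.t_mem_Icc (Nat.succ_le_of_lt hi)).2)

end TaggedPartition

/-- The intervals of a partition whose length lies in `(T / 2 ^ (m + 1), T / 2 ^ m]` contribute at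
most this much to the error of the Riemann–Stieltjes sum of a path with Hölder constant `K`. -/
def dyadicErrorTerm (G : ℝ → ℝ) (K R T α : ℝ) (x : ℝ → ℝ) (m : ℕ) : ℝ≥0∞ :=
  ENNReal.ofReal (2 * K * dyadicScale T m ^ (α - 1)) *
    ∫⁻ s in Icc 0 T, windowIncrement G R (2 * K * dyadicScale T m ^ α) (x s)

section PathwiseBound

variable {h G F : ℝ → ℝ} {K R T α : ℝ} {x : ℝ → ℝ}

theorem ofReal_abs_stepError_le (hG : Monotone G)
    (hhG : ∀ a b, a ≤ b → |h b - h a| ≤ G b - G a) (hint : ∀ a b, IntervalIntegrable h volume a b)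
    (hF : ∀ x, F x = ∫ y in (0:ℝ)..x, h y) (hα : 0 < α) (hK : 0 ≤ K)
    (hxH : ∀ s ∈ Icc (0:ℝ) T, ∀ t ∈ Icc (0:ℝ) T, |x t - x s| ≤ K * |t - s| ^ α)
    (hxR : ∀ s ∈ Icc (0:ℝ) T, |x s| ≤ R) {u v c D : ℝ} (hu : 0 ≤ u) (huv : u < v) (hv : v ≤ T)
    (hc : c ∈ Icc u v) (hDd : D / 2 < v - u) (hdD : v - u ≤ D) :
    ENNReal.ofReal |h (x c) * (x v - x u) - (F (x v) - F (x u))| ≤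
      ENNReal.ofReal (2 * K * D ^ (α - 1)) *
        ∫⁻ s in Ioc u v, windowIncrement G R (2 * K * D ^ α) (x s) := by
  have hd : 0 < v - u := sub_pos.2 huv
  set ρ := K * (v - u) ^ α
  have hosc : ∀ s ∈ Icc u v, |x s - x u| ≤ ρ := fun s hs =>
    (hxH u ⟨hu, huv.le.trans hv⟩ s ⟨hu.trans hs.1, hs.2.trans hv⟩).trans <|
      mul_le_mul_of_nonneg_left (Real.rpow_le_rpow (abs_nonneg _)
        (abs_le.2 ⟨by linarith [hs.1], by linarith [hs.2]⟩) hα.le) hK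
  have hstep := abs_mul_sub_sub_le hG hhG hint hF (hosc v ⟨huv.le, le_rfl⟩) (hosc c hc)
  set V := G (x u + ρ) - G (x u - ρ)
  have hV : 0 ≤ V := sub_nonneg.2 (hG (by linarith [show 0 ≤ ρ by positivity]))
  have hρ : ρ ≤ 2 * K * D ^ (α - 1) * (v - u) := by
    have := mul_le_mul_of_nonneg_left (rpow_le_two_mul_rpow_sub_one_mul hα hd hDd hdD) hK
    linarith
  have hρD : 2 * ρ ≤ 2 * K * D ^ α := by
    have := mul_le_mul_of_nonneg_left (Real.rpow_le_rpow hd.le hdD hα.le) hK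
    linarith
  have hwindow : ∀ s ∈ Ioc u v, ENNReal.ofReal V ≤ windowIncrement G R (2 * K * D ^ α) (x s) :=
    fun s hs => hG.ofReal_sub_le_windowIncrement (hxR s ⟨hu.trans hs.1.le, hs.2.trans hv⟩)
      (hosc s (Ioc_subset_Icc_self hs)) hρD
  calc ENNReal.ofReal |h (x c) * (x v - x u) - (F (x v) - F (x u))|
      ≤ ENNReal.ofReal (2 * K * D ^ (α - 1)) * (ENNReal.ofReal V * volume (Ioc u v)) := by
        have hcoef : 0 ≤ 2 * K * D ^ (α - 1) := by
          have := Real.rpow_nonneg (hd.le.trans hdD) (α - 1)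
          positivity
        rw [Real.volume_Ioc, ← ENNReal.ofReal_mul hV, ← ENNReal.ofReal_mul hcoef]
        refine ENNReal.ofReal_le_ofReal (hstep.trans ?_)
        nlinarith
    _ = ENNReal.ofReal (2 * K * D ^ (α - 1)) * ∫⁻ _ in Ioc u v, ENNReal.ofReal V := by
        rw [setLIntegral_const]
    _ ≤ _ := mul_le_mul_right (setLIntegral_mono' measurableSet_Ioc hwindow) _

theorem ofReal_abs_rsSum_sub_le (hG : Monotone G)
    (hhG : ∀ a b, a ≤ b → |h b - h a| ≤ G b - G a) (hint : ∀ a b, IntervalIntegrable h volume a b)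
    (hF : ∀ x, F x = ∫ y in (0:ℝ)..x, h y) (hα : 0 < α) (hK : 0 ≤ K)
    (hxH : ∀ s ∈ Icc (0:ℝ) T, ∀ t ∈ Icc (0:ℝ) T, |x t - x s| ≤ K * |t - s| ^ α)
    (hxR : ∀ s ∈ Icc (0:ℝ) T, |x s| ≤ R) (π : TaggedPartition T) {M : ℕ}
    (hmesh : π.mesh ≤ dyadicScale T M) :
    ENNReal.ofReal |π.rsSum (fun u => h (x u)) x - (F (x T) - F (x 0))| ≤
      ∑' n, dyadicErrorTerm G K R T α x (n + M) := by
  set w := fun (m : ℕ) (s : ℝ) => windowIncrement G R (2 * K * dyadicScale T m ^ α) (x s)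
  set c := fun m : ℕ => ENNReal.ofReal (2 * K * dyadicScale T m ^ (α - 1))
  have hlocal : ∀ i ∈ Finset.range π.k,
      ENNReal.ofReal |h (x (π.tag i)) * (x (π.t (i + 1)) - x (π.t i)) -
        (F (x (π.t (i + 1))) - F (x (π.t i)))| ≤
      ∑' n, c (n + M) * ∫⁻ s in Ioc (π.t i) (π.t (i + 1)), w (n + M) s := by
    intro i hi
    have hi := Finset.mem_range.1 hi
    obtain ⟨m, hMm, hlower, hupper⟩ := exists_dyadicScale_between (sub_pos.2 (π.mono i hi))
      ((π.t_succ_sub_le_mesh hi).trans hmesh)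
    obtain ⟨n, rfl⟩ := Nat.exists_eq_add_of_le' hMm
    exact (ofReal_abs_stepError_le hG hhG hint hF hα hK hxH hxR (π.t_mem_Icc hi.le).1
      (π.mono i hi) (π.t_mem_Icc hi).2 (π.tagmem i hi) hlower hupper).trans (ENNReal.le_tsum n)
  rw [π.rsSum_sub_sub_eq_sum _ _ (fun u => F (x u))]
  calc ENNReal.ofReal |∑ i ∈ Finset.range π.k, (h (x (π.tag i)) * (x (π.t (i + 1)) - x (π.t i)) -
        (F (x (π.t (i + 1))) - F (x (π.t i))))|
      ≤ ∑ i ∈ Finset.range π.k, ENNReal.ofReal |h (x (π.tag i)) *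
          (x (π.t (i + 1)) - x (π.t i)) - (F (x (π.t (i + 1))) - F (x (π.t i)))| := by
        rw [← ENNReal.ofReal_sum_of_nonneg fun _ _ => abs_nonneg _]
        exact ENNReal.ofReal_le_ofReal (Finset.abs_sum_le_sum_abs _ _)
    _ ≤ ∑ i ∈ Finset.range π.k,
          ∑' n, c (n + M) * ∫⁻ s in Ioc (π.t i) (π.t (i + 1)), w (n + M) s :=
        Finset.sum_le_sum hlocal
    _ = ∑' n, c (n + M) *
          ∑ i ∈ Finset.range π.k, ∫⁻ s in Ioc (π.t i) (π.t (i + 1)), w (n + M) s := by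
        simp_rw [Finset.mul_sum]
        exact (Summable.tsum_finsetSum fun _ _ => ENNReal.summable).symm
    _ ≤ ∑' n, dyadicErrorTerm G K R T α x (n + M) :=
        ENNReal.tsum_le_tsum fun n => mul_le_mul_right (π.sum_setLIntegral_Ioc_le _) _

theorem tendsto_rsSum_of_tsum_dyadicErrorTerm_ne_top (hG : Monotone G)
    (hhG : ∀ a b, a ≤ b → |h b - h a| ≤ G b - G a) (hint : ∀ a b, IntervalIntegrable h volume a b)
    (hF : ∀ x, F x = ∫ y in (0:ℝ)..x, h y) (hT : 0 < T) (hα : 0 < α) (hK : 0 ≤ K)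
    (hxH : ∀ s ∈ Icc (0:ℝ) T, ∀ t ∈ Icc (0:ℝ) T, |x t - x s| ≤ K * |t - s| ^ α)
    (hxR : ∀ s ∈ Icc (0:ℝ) T, |x s| ≤ R) (hfin : ∑' m, dyadicErrorTerm G K R T α x m ≠ ∞)
    (π : ℕ → TaggedPartition T) (hπ : Tendsto (fun n => (π n).mesh) atTop (nhds 0)) :
    Tendsto (fun n => (π n).rsSum (fun u => h (x u)) x) atTop (nhds (F (x T) - F (x 0))) := by
  have herr : Tendsto (fun n => ENNReal.ofReal
      |(π n).rsSum (fun u => h (x u)) x - (F (x T) - F (x 0))|) atTop (nhds 0) := by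
    refine ENNReal.tendsto_nhds_zero.2 fun ε hε => ?_
    obtain ⟨M, hM⟩ := ((ENNReal.tendsto_sum_nat_add _ hfin).eventually
      (eventually_le_nhds hε)).exists
    filter_upwards [hπ.eventually (eventually_le_nhds (dyadicScale_pos hT M))] with n hn
    exact (ofReal_abs_rsSum_sub_le hG hhG hint hF hα hK hxH hxR (π n) hn).trans hM
  have habs := (ENNReal.tendsto_toReal ENNReal.zero_ne_top).comp herr
  simp only [Function.comp_def, ENNReal.toReal_ofReal (abs_nonneg _), ENNReal.toReal_zero] at habs
  exact tendsto_iff_norm_sub_tendsto_zero.2 habs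

end PathwiseBound

theorem HolderOnIcc.exists_nat_bound {α T : ℝ} {x : ℝ → ℝ} (hx : HolderOnIcc α T x)
    (hα : 0 ≤ α) (hT : 0 ≤ T) :
    ∃ N : ℕ, (∀ s ∈ Icc (0:ℝ) T, ∀ t ∈ Icc (0:ℝ) T, |x t - x s| ≤ N * |t - s| ^ α) ∧
      ∀ s ∈ Icc (0:ℝ) T, |x s| ≤ N := by
  obtain ⟨C, hC⟩ := hx
  obtain ⟨N, hN⟩ := exists_nat_ge (|C| + |x 0| + |C| * T ^ α)
  have hCT : 0 ≤ |C| * T ^ α := mul_nonneg (abs_nonneg C) (Real.rpow_nonneg hT α)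
  refine ⟨N, fun s hs t ht => (hC s hs t ht).trans <| mul_le_mul_of_nonneg_right
    (by linarith [le_abs_self C, abs_nonneg (x 0)]) (Real.rpow_nonneg (abs_nonneg _) α),
    fun s hs => ?_⟩
  have hs0 : |s - 0| ^ α ≤ T ^ α :=
    Real.rpow_le_rpow (abs_nonneg _) (by rw [sub_zero, abs_of_nonneg hs.1]; exact hs.2) hα
  have hinc : C * |s - 0| ^ α ≤ |C| * T ^ α :=
    (mul_le_mul_of_nonneg_right (le_abs_self C) (Real.rpow_nonneg (abs_nonneg _) α)).trans
      (mul_le_mul_of_nonneg_left hs0 (abs_nonneg C))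
  linarith [hC 0 ⟨le_rfl, hT⟩ s hs, abs_sub_abs_le_abs_sub (x s) (x 0), abs_nonneg C]

section Expectation

variable {Ω : Type*} [MeasurableSpace Ω] {P : Measure Ω} [SFinite P] {T α : ℝ}
  {X : ℝ → Ω → ℝ} {g : ℝ → ℝ}

theorem BoundedDensityAssumption.lintegral_lintegral_le (hdens : BoundedDensityAssumption P T X g)
    (hX : Measurable (Function.uncurry X)) (hg : AEMeasurable g (volume.restrict (Icc 0 T)))
    {φ : ℝ → ℝ≥0∞} (hφ : Measurable φ) :
    ∫⁻ ω, (∫⁻ s in Icc 0 T, φ (X s ω)) ∂P ≤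
      (∫⁻ s in Icc 0 T, ENNReal.ofReal (g s)) * ∫⁻ y, φ y := by
  rw [lintegral_lintegral_swap (f := fun ω s => φ (X s ω))
      (hφ.comp (hX.comp measurable_swap)).aemeasurable,
    ← lintegral_mul_const'' _ (f := fun s => ENNReal.ofReal (g s))
      (ENNReal.measurable_ofReal.comp_aemeasurable hg)]
  refine lintegral_mono_ae (hdens.mono fun s hs => ?_)
  have hXs : Measurable (X s) := hX.comp measurable_prodMk_left
  have hlaw : P.map (X s) ≤ ENNReal.ofReal (g s) • volume := Measure.le_iff.2 fun A hA => by
    rw [Measure.map_apply hXs hA, Measure.smul_apply, smul_eq_mul]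
    exact hs A hA
  calc ∫⁻ ω, φ (X s ω) ∂P = ∫⁻ y, φ y ∂(P.map (X s)) := (lintegral_map hφ hXs).symm
    _ ≤ ∫⁻ y, φ y ∂(ENNReal.ofReal (g s) • volume) := lintegral_mono' hlaw le_rfl
    _ = ENNReal.ofReal (g s) * ∫⁻ y, φ y := lintegral_smul_measure _ _

variable {G : ℝ → ℝ} {K R : ℝ}

theorem measurable_dyadicErrorTerm (hX : Measurable (Function.uncurry X)) (hG : Monotone G)
    (m : ℕ) : Measurable fun ω => dyadicErrorTerm G K R T α (fun s => X s ω) m :=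
  (Measurable.lintegral_prod_right'
    ((hG.measurable_windowIncrement _ _).comp (hX.comp measurable_swap))).const_mul _

theorem lintegral_dyadicErrorTerm_le (hdens : BoundedDensityAssumption P T X g)
    (hX : Measurable (Function.uncurry X)) (hg : AEMeasurable g (volume.restrict (Icc 0 T)))
    (hG : Monotone G) (hK : 0 ≤ K) (hR : 0 ≤ R) (hT : 0 < T) (hα : 0 < α) (m : ℕ) :
    ∫⁻ ω, dyadicErrorTerm G K R T α (fun s => X s ω) m ∂P ≤
      (∫⁻ s in Icc 0 T, ENNReal.ofReal (g s)) *
        ENNReal.ofReal (8 * K ^ 2 * (G (R + 2 * K * T ^ α) - G (-R - 2 * K * T ^ α))) *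
        ENNReal.ofReal (dyadicScale T m ^ (2 * α - 1)) := by
  set D := dyadicScale T m
  have hD : 0 < D := dyadicScale_pos hT m
  set r := 2 * K * D ^ α
  have hr : 0 ≤ r := by positivity
  have hrT : r ≤ 2 * K * T ^ α := by
    have := Real.rpow_le_rpow hD.le (dyadicScale_le_self hT.le m) hα.le
    simp only [r]; gcongr
  have hwindow : ∫⁻ y, windowIncrement G R r y ≤
      ENNReal.ofReal (2 * r * (G (R + 2 * K * T ^ α) - G (-R - 2 * K * T ^ α))) := by
    refine (hG.lintegral_windowIncrement_le hR hr).trans (ENNReal.ofReal_le_ofReal ?_)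
    gcongr
    · exact hG (by linarith)
    · exact hG (by linarith)
  have hpow : D ^ (α - 1) * D ^ α = D ^ (2 * α - 1) := by
    rw [← Real.rpow_add hD]; ring_nf
  simp only [dyadicErrorTerm]
  rw [lintegral_const_mul' _ _ ENNReal.ofReal_ne_top]
  calc ENNReal.ofReal (2 * K * D ^ (α - 1)) *
        ∫⁻ ω, (∫⁻ s in Icc 0 T, windowIncrement G R r (X s ω)) ∂P
      ≤ ENNReal.ofReal (2 * K * D ^ (α - 1)) * ((∫⁻ s in Icc 0 T, ENNReal.ofReal (g s)) *
          ENNReal.ofReal (2 * r * (G (R + 2 * K * T ^ α) - G (-R - 2 * K * T ^ α)))) :=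
        mul_le_mul_right ((hdens.lintegral_lintegral_le hX hg
          (hG.measurable_windowIncrement R r)).trans (mul_le_mul_right hwindow _)) _
    _ = _ := by
        rw [mul_left_comm, ← ENNReal.ofReal_mul (by positivity),
          mul_assoc (∫⁻ s in Icc 0 T, ENNReal.ofReal (g s)),
          ← ENNReal.ofReal_mul' (Real.rpow_nonneg hD.le _), ← hpow]
        congr 2
        ring

theorem ae_tsum_dyadicErrorTerm_ne_top (hdens : BoundedDensityAssumption P T X g)
    (hX : Measurable (Function.uncurry X)) (hg : IntegrableOn g (Icc 0 T))
    (hG : Monotone G) (hK : 0 ≤ K) (hR : 0 ≤ R) (hT : 0 < T) (hα : 1 / 2 < α) :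
    ∀ᵐ ω ∂P, ∑' m, dyadicErrorTerm G K R T α (fun s => X s ω) m ≠ ∞ := by
  refine (ae_lt_top (Measurable.tsum (measurable_dyadicErrorTerm hX hG)) ?_).mono
    fun _ => LT.lt.ne
  rw [lintegral_tsum fun m => (measurable_dyadicErrorTerm hX hG m).aemeasurable]
  refine ne_top_of_le_ne_top ?_ (ENNReal.tsum_le_tsum
    (lintegral_dyadicErrorTerm_le hdens hX hg.aemeasurable hG hK hR hT (by linarith)))
  rw [ENNReal.tsum_mul_left, ← ENNReal.ofReal_tsum_of_nonneg
    (fun m => Real.rpow_nonneg (dyadicScale_pos hT m).le _)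
    (summable_dyadicScale_rpow hT.le (by linarith))]
  exact ENNReal.mul_ne_top (ENNReal.mul_ne_top hg.lintegral_lt_top.ne ENNReal.ofReal_ne_top)
    ENNReal.ofReal_ne_top

end Expectation

theorem ito_formula_pathwise_general
    {Ω : Type*} [MeasurableSpace Ω] (P : Measure Ω) [IsProbabilityMeasure P]
    (T α : ℝ) (hT : 0 < T) (hα : 1 / 2 < α)
    (X : ℝ → Ω → ℝ) (hX : Measurable (Function.uncurry X))
    (hXHolder : ∀ᵐ ω ∂P, HolderOnIcc α T (fun t => X t ω))
    (g : ℝ → ℝ) (hgL1 : IntegrableOn g (Set.Icc 0 T))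
    (hdens : BoundedDensityAssumption P T X g)
    (h : ℝ → ℝ)
    (hbv : LocallyBoundedVariationOn h Set.univ)
    (F : ℝ → ℝ) (hF : ∀ x : ℝ, F x = ∫ y in (0:ℝ)..x, h y) :
    ∀ π : ℕ → TaggedPartition T,
      Tendsto (fun n => (π n).mesh) atTop (nhds 0) →
      ∀ᵐ ω ∂P, Tendsto
        (fun n => (π n).rsSum (fun u => h (X u ω)) (fun u => X u ω))
        atTop (nhds (F (X T ω) - F (X 0 ω))) := by
  intro π hπ
  set V := variationOnFromTo h univ 0
  have hV : Monotone V := monotoneOn_univ.1 (variationOnFromTo.monotoneOn hbv (mem_univ 0))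
  have hhV : ∀ a b, a ≤ b → |h b - h a| ≤ V b - V a := fun a b hab =>
    variationOnFromTo.abs_sub_le_sub_of_le hbv (mem_univ _) (mem_univ _) (mem_univ _) hab
  have hint : ∀ a b, IntervalIntegrable h volume a b := fun a b =>
    hbv.intervalIntegrable (subset_univ _)
  have hfin : ∀ᵐ ω ∂P, ∀ N : ℕ, ∑' m, dyadicErrorTerm V N N T α (fun s => X s ω) m ≠ ∞ :=
    ae_all_iff.2 fun N => ae_tsum_dyadicErrorTerm_ne_top hdens hX hgL1 hV N.cast_nonneg
      N.cast_nonneg hT hα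
  filter_upwards [hXHolder, hfin] with ω hHolder hfinω
  obtain ⟨N, hNH, hNR⟩ := hHolder.exists_nat_bound (by linarith) hT.le
  exact tendsto_rsSum_of_tsum_dyadicErrorTerm_ne_top hV hhV hint hF hT (by linarith)
    N.cast_nonneg hNH hNR (hfinω N) π hπ

/-- Itô formula. With `F(x) = ∫₀^x h(y) dy`, the Riemann–Stieltjes sums
`Σ_i h(X_{τ_i})(X_{t_i} - X_{t_{i-1}})` converge almost surely to `F(X_T) - F(X_0)` along any
sequence of tagged partitions with vanishing mesh. -/
theorem ito_formula_pathwise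
    {Ω : Type*} [MeasurableSpace Ω] (P : Measure Ω) [IsProbabilityMeasure P]
    (T α : ℝ) (hT : 0 < T) (hα : 1 / 2 < α)
    (X : ℝ → Ω → ℝ) (hX : Measurable (Function.uncurry X))
    (hXHolder : ∀ᵐ ω ∂P, HolderOnIcc α T (fun t => X t ω))
    (g : ℝ → ℝ) (hg0 : ∀ t, 0 ≤ g t) (hgL1 : IntegrableOn g (Set.Icc 0 T))
    (hdens : BoundedDensityAssumption P T X g)
    (h : ℝ → ℝ) (hlc : ∀ x : ℝ, ContinuousWithinAt h (Set.Iic x) x)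
    (hbv : LocallyBoundedVariationOn h Set.univ)
    (F : ℝ → ℝ) (hF : ∀ x : ℝ, F x = ∫ y in (0:ℝ)..x, h y) :
    ∀ π : ℕ → TaggedPartition T,
      Tendsto (fun n => (π n).mesh) atTop (nhds 0) →
      ∀ᵐ ω ∂P, Tendsto
        (fun n => (π n).rsSum (fun u => h (X u ω)) (fun u => X u ω))
        atTop (nhds (F (X T ω) - F (X 0 ω))) :=
  ito_formula_pathwise_general P T α hT hα X hX hXHolder g hgL1 hdens h hbv F hF

end
end

section
/- Let T > 0, α > 1/2, and let x : [0,T] → ℝ be α-Hölder continuous. Let f : ℝ → ℝ be twice continuously differentiable. Then for every t ∈ [0,T] and every sequence (π_n) of partitions of [0,t] with mesh |π_n| → 0, the left-endpoint Riemann–Stieltjes sums Σ_{i=1}^{k(n)} f′(x_{t_{i−1}^n}) (x_{t_i^n} − x_{t_{i−1}^n}) converge to f(x_t) − f(x_0) as n → ∞; that is, f(x_t) = f(x_0) + ∫₀^t f′(x_s) dx_s with the integral understood as the limit of Riemann–Stieltjes sums. -/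
open Set Filter

noncomputable section

/-- A partition `0 = t_0 < t_1 < … < t_k = T` of `[0,T]`. -/
structure RPartition (T : ℝ) where
  k : ℕ
  hk : 0 < k
  t : ℕ → ℝ
  h0 : t 0 = 0
  hT : t k = T
  mono : ∀ i, i < k → t i < t (i + 1)

/-- The mesh `|π| = max_i (t_i - t_{i-1})` of a partition. -/
def RPartition.mesh {T : ℝ} (π : RPartition T) : ℝ :=
  (Finset.range π.k).sup' (Finset.nonempty_range_iff.mpr π.hk.ne')
    (fun i => π.t (i + 1) - π.t i)

/-- The left-endpoint Riemann–Stieltjes sum `Σ_i Z(t_{i-1}) (Y(t_i) - Y(t_{i-1}))`. -/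
def RPartition.leftSum {T : ℝ} (π : RPartition T) (Z Y : ℝ → ℝ) : ℝ :=
  ∑ i ∈ Finset.range π.k, Z (π.t i) * (Y (π.t (i + 1)) - Y (π.t i))

/-!
Taylor's formula at the left endpoints bounds the `i`-th error term
`f(x_{t_{i+1}}) - f(x_{t_i}) - f'(x_{t_i}) (x_{t_{i+1}} - x_{t_i})` by `M (x_{t_{i+1}} - x_{t_i})²`,
where `M` bounds `f''` on the (bounded) range of `x`; so the total error is at most `M` times the
quadratic variation of `x` along the partition. The Hölder bound gives
`(x_{t_{i+1}} - x_{t_i})² ≤ C² Δt^{2α} ≤ C² |π|^{2α-1} Δt`, hence a quadratic variation of at most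
`C² |π|^{2α-1} t`, which tends to `0` with the mesh because `2α - 1 > 0`.
-/

theorem abs_sub_sub_deriv_mul_le {f : ℝ → ℝ} {s : Set ℝ} {M a b : ℝ}
    (hf : Differentiable ℝ f) (hf' : Differentiable ℝ (deriv f)) (hs : Convex ℝ s)
    (hM : ∀ y ∈ s, |deriv (deriv f) y| ≤ M) (ha : a ∈ s) (hb : b ∈ s) :
    |f b - f a - deriv f a * (b - a)| ≤ M * (b - a) ^ 2 := by
  have hM0 : 0 ≤ M := (abs_nonneg _).trans (hM a ha)
  have hab : uIcc a b ⊆ s := segment_eq_uIcc a b ▸ hs.segment_subset ha hb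
  set g : ℝ → ℝ := fun y => f y - deriv f a * y
  have hg : ∀ u, HasDerivAt g (deriv f u - deriv f a) u := fun u =>
    (hf u).hasDerivAt.sub (by simpa using (hasDerivAt_id u).const_mul (deriv f a))
  have hg' : ∀ u ∈ uIcc a b, ‖deriv g u‖ ≤ M * |b - a| := fun u hu =>
    calc ‖deriv g u‖ = ‖deriv f u - deriv f a‖ := by rw [(hg u).deriv]
      _ ≤ M * ‖u - a‖ :=
        hs.norm_image_sub_le_of_norm_deriv_le (fun y _ => hf' y) hM ha (hab hu)
      _ ≤ M * |b - a| := by gcongr; exact abs_sub_left_of_mem_uIcc hu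
  have := (convex_uIcc a b).norm_image_sub_le_of_norm_deriv_le
    (fun u _ => (hg u).differentiableAt) hg' left_mem_uIcc right_mem_uIcc
  calc |f b - f a - deriv f a * (b - a)| = ‖g b - g a‖ := by
        rw [Real.norm_eq_abs]; congr 1; ring
    _ ≤ M * |b - a| * ‖b - a‖ := this
    _ = M * (b - a) ^ 2 := by rw [Real.norm_eq_abs, mul_assoc, ← sq, sq_abs]

namespace RPartition

variable {T : ℝ} (π : RPartition T)

lemma t_le_t {i j : ℕ} (hij : i ≤ j) (hj : j ≤ π.k) : π.t i ≤ π.t j := by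
  induction j, hij using Nat.le_induction with
  | base => rfl
  | succ j _ ih => exact (ih (by omega)).trans (π.mono j (by omega)).le

lemma t_mem_Icc {i : ℕ} (hi : i ≤ π.k) : π.t i ∈ Icc 0 T := by
  have := And.intro (π.t_le_t i.zero_le hi) (π.t_le_t hi le_rfl)
  rwa [π.h0, π.hT] at this

lemma sub_le_mesh {i : ℕ} (hi : i < π.k) : π.t (i + 1) - π.t i ≤ π.mesh :=
  Finset.le_sup' (fun j => π.t (j + 1) - π.t j) (Finset.mem_range.mpr hi)

lemma sum_sub_eq (g : ℝ → ℝ) :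
    ∑ i ∈ Finset.range π.k, (g (π.t (i + 1)) - g (π.t i)) = g T - g 0 := by
  rw [Finset.sum_range_sub (fun i => g (π.t i)), π.hT, π.h0]

def quadVar (x : ℝ → ℝ) : ℝ :=
  ∑ i ∈ Finset.range π.k, (x (π.t (i + 1)) - x (π.t i)) ^ 2

theorem abs_leftSum_deriv_sub_le {f x : ℝ → ℝ} {s : Set ℝ} {M : ℝ}
    (hf : Differentiable ℝ f) (hf' : Differentiable ℝ (deriv f)) (hs : Convex ℝ s)
    (hM : ∀ y ∈ s, |deriv (deriv f) y| ≤ M) (hxs : ∀ i ≤ π.k, x (π.t i) ∈ s) :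
    |π.leftSum (fun u => deriv f (x u)) x - (f (x T) - f (x 0))| ≤ M * π.quadVar x := by
  rw [← π.sum_sub_eq fun u => f (x u), leftSum, quadVar, ← Finset.sum_sub_distrib,
    Finset.mul_sum]
  refine (Finset.abs_sum_le_sum_abs _ _).trans (Finset.sum_le_sum fun i hi => ?_)
  rw [Finset.mem_range] at hi
  rw [abs_sub_comm]
  exact abs_sub_sub_deriv_mul_le hf hf' hs hM (hxs i hi.le) (hxs (i + 1) hi)

theorem quadVar_le_of_holder {x : ℝ → ℝ} {α C : ℝ} (hα : 1 / 2 ≤ α)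
    (hx : ∀ s ∈ Icc 0 T, ∀ u ∈ Icc 0 T, |x u - x s| ≤ C * |u - s| ^ α) :
    π.quadVar x ≤ C ^ 2 * π.mesh ^ (2 * α - 1) * T := by
  calc π.quadVar x
      ≤ ∑ i ∈ Finset.range π.k, C ^ 2 * π.mesh ^ (2 * α - 1) * (π.t (i + 1) - π.t i) :=
        Finset.sum_le_sum fun i hi => ?_
    _ = C ^ 2 * π.mesh ^ (2 * α - 1) * T := by
        rw [← Finset.mul_sum, π.sum_sub_eq fun u => u, sub_zero]
  rw [Finset.mem_range] at hi
  set Δ := π.t (i + 1) - π.t i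
  have hΔ : 0 < Δ := sub_pos.mpr (π.mono i hi)
  have hinc : |x (π.t (i + 1)) - x (π.t i)| ≤ C * Δ ^ α := by
    have := hx _ (π.t_mem_Icc hi.le) _ (π.t_mem_Icc (Nat.succ_le_of_lt hi))
    rwa [abs_of_pos hΔ] at this
  calc (x (π.t (i + 1)) - x (π.t i)) ^ 2 ≤ (C * Δ ^ α) ^ 2 := by
        rw [← sq_abs]; gcongr
    _ = C ^ 2 * Δ ^ (2 * α - 1) * Δ := by
        rw [mul_assoc, ← Real.rpow_add_one hΔ.ne', sub_add_cancel, mul_comm 2 α,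
          Real.rpow_mul hΔ.le, Real.rpow_two, mul_pow]
    _ ≤ C ^ 2 * π.mesh ^ (2 * α - 1) * Δ := by
        gcongr
        · linarith
        · exact π.sub_le_mesh hi

end RPartition

theorem HolderOnIcc.mono {α T t : ℝ} {x : ℝ → ℝ} (hx : HolderOnIcc α T x) (ht : t ≤ T) :
    HolderOnIcc α t x :=
  let ⟨C, hC⟩ := hx
  ⟨C, fun s hs u hu => hC s (Icc_subset_Icc_right ht hs) u (Icc_subset_Icc_right ht hu)⟩

theorem HolderOnIcc.exists_abs_le {α T : ℝ} {x : ℝ → ℝ} (hx : HolderOnIcc α T x) (hα : 0 ≤ α) :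
    ∃ K, ∀ u ∈ Icc 0 T, |x u| ≤ K := by
  obtain ⟨C, hC⟩ := hx
  refine ⟨|x 0| + |C| * T ^ α, fun u hu => ?_⟩
  have h0 : (0 : ℝ) ∈ Icc 0 T := ⟨le_rfl, hu.1.trans hu.2⟩
  calc |x u| ≤ |x 0| + |x u - x 0| := by simpa using abs_add_le (x 0) (x u - x 0)
    _ ≤ |x 0| + |C| * T ^ α := by
      gcongr
      calc |x u - x 0| ≤ C * |u - 0| ^ α := hC 0 h0 u hu
        _ ≤ |C| * T ^ α := by
          rw [sub_zero, abs_of_nonneg hu.1]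
          exact mul_le_mul (le_abs_self C) (Real.rpow_le_rpow hu.1 hu.2 hα)
            (Real.rpow_nonneg hu.1 α) (abs_nonneg C)

theorem HolderOnIcc.tendsto_quadVar_zero {α T : ℝ} {x : ℝ → ℝ} (hx : HolderOnIcc α T x)
    (hα : 1 / 2 < α) (π : ℕ → RPartition T)
    (hmesh : Tendsto (fun n => (π n).mesh) atTop (nhds 0)) :
    Tendsto (fun n => (π n).quadVar x) atTop (nhds 0) := by
  obtain ⟨C, hC⟩ := hx
  have hpow : Tendsto (fun n => (π n).mesh ^ (2 * α - 1)) atTop (nhds 0) := by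
    simpa [Function.comp_def, Real.zero_rpow (by linarith : 2 * α - 1 ≠ 0)] using
      ((Real.continuousAt_rpow_const 0 (2 * α - 1) (Or.inr (by linarith))).tendsto.comp hmesh)
  refine squeeze_zero (fun n => Finset.sum_nonneg fun i _ => sq_nonneg _)
    (fun n => (π n).quadVar_le_of_holder hα.le hC) ?_
  simpa using (hpow.const_mul (C ^ 2)).mul_const T

theorem ito_formula_smooth_general
    (T α : ℝ) (hα : 1 / 2 < α)
    (x : ℝ → ℝ) (hx : HolderOnIcc α T x)
    (f : ℝ → ℝ) (hf : ContDiff ℝ 2 f) :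
    ∀ t ∈ Set.Icc (0:ℝ) T, ∀ π : ℕ → RPartition t,
      Tendsto (fun n => (π n).mesh) atTop (nhds 0) →
      Tendsto (fun n => (π n).leftSum (fun u => deriv f (x u)) x)
        atTop (nhds (f (x t) - f (x 0))) := by
  intro t ht π hmesh
  have hxt : HolderOnIcc α t x := hx.mono ht.2
  obtain ⟨K, hK⟩ := hxt.exists_abs_le (by linarith)
  obtain ⟨M, hM⟩ := (isCompact_Icc (a := -K) (b := K)).exists_bound_of_continuousOn
    (hf.deriv' (n := 1)).continuous_deriv_one.continuousOn
  have herr : ∀ n, |(π n).leftSum (fun u => deriv f (x u)) x - (f (x t) - f (x 0))|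
      ≤ M * (π n).quadVar x := fun n =>
    (π n).abs_leftSum_deriv_sub_le (hf.differentiable (by norm_num)) hf.differentiable_deriv_two
      (convex_Icc (-K) K) hM fun i hi => abs_le.mp (hK _ ((π n).t_mem_Icc hi))
  rw [← tendsto_sub_nhds_zero_iff]
  refine squeeze_zero_norm herr ?_
  simpa using (hxt.tendsto_quadVar_zero hα π hmesh).const_mul M

/-- smooth Itô formula for an `α`-Hölder path with `α > 1/2`: for every
`t ∈ [0,T]`, the left-endpoint Riemann–Stieltjes sums `Σ_i f'(x_{t_{i-1}})(x_{t_i}-x_{t_{i-1}})`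
along any sequence of partitions of `[0,t]` with vanishing mesh converge to `f(x_t) - f(x_0)`. -/
theorem ito_formula_smooth
    (T α : ℝ) (hT : 0 < T) (hα : 1 / 2 < α)
    (x : ℝ → ℝ) (hx : HolderOnIcc α T x)
    (f : ℝ → ℝ) (hf : ContDiff ℝ 2 f) :
    ∀ t ∈ Set.Icc (0:ℝ) T, ∀ π : ℕ → RPartition t,
      Tendsto (fun n => (π n).mesh) atTop (nhds 0) →
      Tendsto (fun n => (π n).leftSum (fun u => deriv f (x u)) x)
        atTop (nhds (f (x t) - f (x 0))) :=
  ito_formula_smooth_general T α hα x hx f hf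

end
end

section
/- Let T > 0, α ∈ (0,1), a ∈ ℝ, t ∈ (0,T], and let x : [0,T] → ℝ be continuous. Define S := sup{u ∈ [0,t] : x_u = a} if this set is nonempty and S := 0 otherwise. Then: (i) if a < x_t then S < t; and (ii) ∫₀^t 1_{\{x_s < a < x_t\}} (t−s)^{−1−α} ds ≤ 1_{\{a < x_t\}} · ((t−S)^{−α} − t^{−α}) / α. -/
/-!
Once the path is above `a` at time `t`, every `s < t` with `x s < a` is followed by a crossing of
`a` in `[s, t]` (intermediate value theorem), so `s ≤ S`; and `S < t` because the hitting set is
closed, so its supremum is itself a hitting time. The integral is therefore at most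
`∫₀^S (t - s)^(-1-α) ds = ((t - S)^(-α) - t^(-α)) / α`.
-/

open MeasureTheory Set
open scoped ENNReal

section HittingSet

variable {x : ℝ → ℝ} {a t : ℝ}

lemma bddAbove_hittingSet : BddAbove {u | u ∈ Icc (0:ℝ) t ∧ x u = a} :=
  ⟨t, fun _ hu => hu.1.2⟩

lemma sSup_hittingSet_nonneg : 0 ≤ sSup {u | u ∈ Icc (0:ℝ) t ∧ x u = a} :=
  Real.sSup_nonneg fun _ hu => hu.1.1

lemma le_sSup_hittingSet_of_lt (hx : ContinuousOn x (Icc 0 t)) {s : ℝ} (hs : s ∈ Icc 0 t)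
    (hxs : x s < a) (hxt : a < x t) : s ≤ sSup {u | u ∈ Icc (0:ℝ) t ∧ x u = a} := by
  obtain ⟨u, hu, hxu⟩ := intermediate_value_Icc hs.2 (hx.mono (Icc_subset_Icc_left hs.1))
    ⟨hxs.le, hxt.le⟩
  exact hu.1.trans (le_csSup bddAbove_hittingSet ⟨⟨hs.1.trans hu.1, hu.2⟩, hxu⟩)

lemma sSup_hittingSet_lt (hx : ContinuousOn x (Icc 0 t)) (ht : 0 < t) (hxt : a < x t) :
    sSup {u | u ∈ Icc (0:ℝ) t ∧ x u = a} < t := by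
  set A := {u | u ∈ Icc (0:ℝ) t ∧ x u = a}
  rcases eq_empty_or_nonempty A with hA | hA
  · rwa [hA, Real.sSup_empty]
  have hclosed : IsClosed A :=
    hx.preimage_isClosed_of_isClosed isClosed_Icc isClosed_singleton
  have hmem : sSup A ∈ A := hclosed.csSup_mem hA bddAbove_hittingSet
  exact (csSup_le hA fun _ hu => hu.1.2).lt_of_ne fun hEq => hxt.ne' (hEq ▸ hmem.2)

end HittingSet

lemma integral_sub_rpow_neg_one_sub {α S t : ℝ} (hα : α ≠ 0) (ht : 0 < t) (hSt : S < t) :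
    ∫ s in (0:ℝ)..S, (t - s) ^ (-(1 + α)) = ((t - S) ^ (-α) - t ^ (-α)) / α := by
  have hexp : -(1 + α) ≠ -1 := by contrapose! hα; linarith
  rw [intervalIntegral.integral_comp_sub_left (fun u => u ^ (-(1 + α))) t, sub_zero,
    integral_rpow (Or.inr ⟨hexp, notMem_uIcc_of_lt (by linarith) ht⟩)]
  rw [show -(1 + α) + 1 = -α by ring, div_neg, ← neg_div, neg_sub]

lemma lintegral_Ioc_sub_rpow {α S t : ℝ} (hα : α ≠ 0) (hS : 0 ≤ S) (hSt : S < t) :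
    ∫⁻ s in Ioc 0 S, ENNReal.ofReal ((t - s) ^ (-(1 + α))) =
      ENNReal.ofReal (((t - S) ^ (-α) - t ^ (-α)) / α) := by
  have hcont : ContinuousOn (fun s => (t - s) ^ (-(1 + α))) (Icc 0 S) :=
    (continuousOn_const.sub continuousOn_id).rpow_const fun s hs =>
      Or.inl (sub_ne_zero_of_ne (hs.2.trans_lt hSt).ne')
  have hnonneg : 0 ≤ᵐ[volume.restrict (Ioc 0 S)] fun s => (t - s) ^ (-(1 + α)) :=
    ae_restrict_of_forall_mem measurableSet_Ioc fun s hs =>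
      Real.rpow_nonneg (by linarith [hs.2]) _
  rw [← ofReal_integral_eq_lintegral_ofReal
    (hcont.integrableOn_Icc.mono_set Ioc_subset_Icc_self) hnonneg,
    ← intervalIntegral.integral_of_le hS, integral_sub_rpow_neg_one_sub hα (hS.trans_lt hSt) hSt]

theorem last_hitting_time_estimate_general
    (T α a t : ℝ) (hα : α ∈ Set.Ioo (0:ℝ) 1) (ht : t ∈ Set.Ioc (0:ℝ) T)
    (x : ℝ → ℝ) (hx : ContinuousOn x (Set.Icc 0 T))
    (S : ℝ) (hS : S = sSup {u | u ∈ Set.Icc (0:ℝ) t ∧ x u = a}) :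
    (a < x t → S < t) ∧
    (∫⁻ s in Set.Ioo (0:ℝ) t,
        (if x s < a ∧ a < x t then ENNReal.ofReal ((t - s) ^ (-(1 + α))) else 0))
      ≤ (if a < x t then ENNReal.ofReal (((t - S) ^ (-α) - t ^ (-α)) / α) else 0) := by
  have hxt : ContinuousOn x (Icc 0 t) := hx.mono (Icc_subset_Icc_right ht.2)
  have hSt : a < x t → S < t := hS ▸ sSup_hittingSet_lt hxt ht.1
  refine ⟨hSt, ?_⟩
  split_ifs with hat
  · have hle : ∀ s ∈ Ioo 0 t, x s < a → s ≤ S := fun s hs hxs =>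
      hS ▸ le_sSup_hittingSet_of_lt hxt (Ioo_subset_Icc_self hs) hxs hat
    set g : ℝ → ℝ≥0∞ := fun s => ENNReal.ofReal ((t - s) ^ (-(1 + α)))
    calc (∫⁻ s in Ioo 0 t, if x s < a ∧ a < x t then g s else 0)
        ≤ ∫⁻ s in Ioo 0 t, (Ioc 0 S).indicator g s :=
          setLIntegral_mono' measurableSet_Ioo fun s hs => by
            split_ifs with hcross
            · exact (indicator_of_mem (show s ∈ Ioc 0 S from ⟨hs.1, hle s hs hcross.1⟩) g).ge
            · exact zero_le
      _ ≤ ∫⁻ s, (Ioc 0 S).indicator g s := setLIntegral_le_lintegral _ _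
      _ = ENNReal.ofReal (((t - S) ^ (-α) - t ^ (-α)) / α) := by
          rw [lintegral_indicator measurableSet_Ioc,
            lintegral_Ioc_sub_rpow hα.1.ne' (hS ▸ sSup_hittingSet_nonneg) (hSt hat)]
  · simp [hat]

/-- last hitting time estimate. With `S` the last time in `[0,t]` at which the
continuous path `x` equals `a` (and `S = 0` if there is no such time; note `sSup ∅ = 0` in
`ℝ`): (i) if `a < x t` then `S < t`, and (ii)
`∫₀^t 1_{x_s < a < x_t} (t-s)^{-1-α} ds ≤ 1_{a < x_t} ((t-S)^{-α} - t^{-α})/α`. -/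
theorem last_hitting_time_estimate
    (T α a t : ℝ) (hT : 0 < T) (hα : α ∈ Set.Ioo (0:ℝ) 1) (ht : t ∈ Set.Ioc (0:ℝ) T)
    (x : ℝ → ℝ) (hx : ContinuousOn x (Set.Icc 0 T))
    (S : ℝ) (hS : S = sSup {u | u ∈ Set.Icc (0:ℝ) t ∧ x u = a}) :
    (a < x t → S < t) ∧
    (∫⁻ s in Set.Ioo (0:ℝ) t,
        (if x s < a ∧ a < x t then ENNReal.ofReal ((t - s) ^ (-(1 + α))) else 0))
      ≤ (if a < x t then ENNReal.ofReal (((t - S) ^ (-α) - t ^ (-α)) / α) else 0) :=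
  last_hitting_time_estimate_general T α a t hα ht x hx S hS
end
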